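/- arXiv:math/0502458 — 7 statements merged into one kernel-verified Lean document; each statement's English description precedes it below -/
import Mathlib

section
/- Let (X,T,m,α) be a Gibbs-Markov map. Then there exists B>0 such that for every measurable set Z, every n, and every cylinder [a_0,...,a_{n-1}] = ∩_{i<n} T^{-i}(a_i) of positive measure, B^{-1}·m(T(a_{n-1})∩Z)/m(T a_{n-1}) ≤ m([a_0,...,a_{n-1}]∩T^{-n}Z)/m[a_0,...,a_{n-1}] ≤ B·m(T(a_{n-1})∩Z)/m(T a_{n-1}). -/
open MeasureTheory Filter ENNReal

variable {X G ι : Type*}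

/-- The essential Lipschitz constant of `f` on the set `Z`:
the infimum of constants `C` such that `edist (f x) (f y) ≤ C * edist x y`
for `x, y` in a full-measure subset of `Z`. -/
noncomputable def essLip [PseudoEMetricSpace X] [PseudoEMetricSpace G] [MeasurableSpace X]
    (m : Measure X) (f : X → G) (Z : Set X) : ℝ≥0∞ :=
  sInf {C : ℝ≥0∞ | ∃ Ω : Set X, Ω ⊆ Z ∧ m (Z \ Ω) = 0 ∧
    ∀ x ∈ Ω, ∀ y ∈ Ω, edist (f x) (f y) ≤ C * edist x y}

/-- A Gibbs-Markov map: a nonsingular map `T` on a bounded metric probability space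
with a countable Markov partition `α` of positive-measure sets, with big images and
preimages, expansion by a factor `lam > 1`, and bounded distortion of the inverse
Jacobian `g`. -/
structure GibbsMarkov [MetricSpace X] [MeasurableSpace X]
    (m : Measure X) (T : X → X) (α : ι → Set X) (lam : ℝ) : Prop where
  countable : Countable ι
  bounded : Bornology.IsBounded (Set.univ : Set X)
  measT : Measurable T
  meas : ∀ i, MeasurableSet (α i)
  pos : ∀ i, 0 < m (α i)
  disj : Pairwise (Function.onFun Disjoint α)
  cover : m (⋃ i, α i)ᶜ = 0
  inj : ∀ i, Set.InjOn T (α i)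
  markov : ∀ i, ∃ s : Set ι, m (symmDiff (T '' α i) (⋃ j ∈ s, α j)) = 0
  bip : ∃ F : Finset ι, ∀ i : ι, (∃ i' ∈ F, m (α i \ T '' α i') = 0) ∧
        (∃ j' ∈ F, m (α j' \ T '' α i) = 0)
  one_lt_lam : 1 < lam
  expand : ∀ i, ∃ Ω : Set X, Ω ⊆ α i ∧ m (α i \ Ω) = 0 ∧
      ∀ x ∈ Ω, ∀ y ∈ Ω, lam * dist x y ≤ dist (T x) (T y)
  distortion : ∃ g : X → ℝ, (∀ x, 0 < g x) ∧
      (∀ i, ∀ s : Set X, s ⊆ α i → MeasurableSet s →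
        m (T '' s) = ∫⁻ x in s, ENNReal.ofReal (g x)⁻¹ ∂m) ∧
      ∃ C : ℝ, 0 < C ∧ ∀ i, ∃ Ω : Set X, Ω ⊆ α i ∧ m (α i \ Ω) = 0 ∧
        ∀ x ∈ Ω, ∀ y ∈ Ω, |1 - g x / g y| ≤ C * dist (T x) (T y)

/-- `A` is an atom of the partition `α*` generated by the images of the elements
of the partition `α` under `T`. -/
def isImageAtom (T : X → X) (α : ι → Set X) (A : Set X) : Prop :=
  A.Nonempty ∧ ∃ S : Set ι,
    A = (⋂ i ∈ S, T '' α i) ∩ (⋂ i ∈ Sᶜ, (T '' α i)ᶜ)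

section GMAux

/-- The cylinder set `[a₀, …, aₙ]`. -/
def gmCyl (T : X → X) (α : ι → Set X) (n : ℕ) (a : Fin (n + 1) → ι) : Set X :=
  ⋂ i : Fin (n + 1), T^[(i : ℕ)] ⁻¹' α (a i)

lemma gmCyl_zero (T : X → X) (α : ι → Set X) (a : Fin 1 → ι) :
    gmCyl T α 0 a = α (a 0) := by
  ext x
  simp only [gmCyl, Set.mem_iInter, Set.mem_preimage]
  constructor
  · intro h; simpa using h 0
  · intro h i
    rcases Fin.eq_zero_or_eq_succ i with rfl | ⟨j, rfl⟩
    · simpa using h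
    · exact j.elim0

lemma gmCyl_succ (T : X → X) (α : ι → Set X) (n : ℕ) (a : Fin (n + 2) → ι) :
    gmCyl T α (n + 1) a = α (a 0) ∩ T ⁻¹' gmCyl T α n (a ∘ Fin.succ) := by
  ext x
  simp only [gmCyl, Set.mem_iInter, Set.mem_preimage, Set.mem_inter_iff, Function.comp_apply]
  constructor
  · intro h
    refine ⟨by simpa using h 0, fun i => ?_⟩
    have := h i.succ
    simpa [Function.iterate_succ_apply] using this
  · rintro ⟨h0, h⟩ i
    rcases Fin.eq_zero_or_eq_succ i with rfl | ⟨j, rfl⟩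
    · simpa using h0
    · have := h j
      simpa [Function.iterate_succ_apply] using this

lemma gmCyl_subset_zero (T : X → X) (α : ι → Set X) (n : ℕ) (a : Fin (n + 1) → ι) :
    gmCyl T α n a ⊆ α (a 0) := by
  intro x hx
  have := Set.mem_iInter.mp hx 0
  simpa using this

lemma gmCyl_measurable [MeasurableSpace X] {T : X → X} {α : ι → Set X}
    (hT : Measurable T) (hα : ∀ i, MeasurableSet (α i)) (n : ℕ) (a : Fin (n + 1) → ι) :
    MeasurableSet (gmCyl T α n a) :=
  MeasurableSet.iInter fun i => (hT.iterate (i : ℕ)) (hα (a i))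

/-- Two-sided bound for the set integral of a function bounded a.e. on `s`. -/
lemma gm_lint_bounds [MeasurableSpace X] (m : Measure X) {f : X → ℝ≥0∞}
    {s Gs : Set X} (hs : MeasurableSet s) (hnull : m (s \ Gs) = 0) {lo hi : ℝ≥0∞}
    (h : ∀ x ∈ Gs, lo ≤ f x ∧ f x ≤ hi) :
    lo * m s ≤ ∫⁻ x in s, f x ∂m ∧ ∫⁻ x in s, f x ∂m ≤ hi * m s := by
  have hae : ∀ᵐ x ∂m.restrict s, lo ≤ f x ∧ f x ≤ hi := by
    rw [ae_restrict_iff' hs, ae_iff]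
    refine measure_mono_null (fun x hx => ?_) hnull
    rw [Set.mem_setOf_eq, Classical.not_imp] at hx
    exact ⟨hx.1, fun hG => hx.2 (h x hG)⟩
  constructor
  · calc lo * m s = ∫⁻ _ in s, lo ∂m := (setLIntegral_const s lo).symm
      _ ≤ _ := lintegral_mono_ae (hae.mono fun x hx => hx.1)
  · calc (∫⁻ x in s, f x ∂m) ≤ ∫⁻ _ in s, hi ∂m :=
        lintegral_mono_ae (hae.mono fun x hx => hx.2)
      _ = hi * m s := setLIntegral_const s hi

lemma gm_comb {c ρ bn q u p v q' p' : ℝ≥0∞} (hc0 : c ≠ 0) (hct : c ≠ ⊤)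
    (h1 : c * q ≤ ρ * q') (h2 : q' * v ≤ bn * (u * p')) (h3 : p' ≤ ρ * (c * p)) :
    q * v ≤ ρ ^ 2 * bn * (u * p) := by
  have h : c * (q * v) ≤ c * (ρ ^ 2 * bn * (u * p)) := by
    calc c * (q * v) = (c * q) * v := (mul_assoc _ _ _).symm
      _ ≤ (ρ * q') * v := mul_le_mul_left h1 v
      _ = ρ * (q' * v) := mul_assoc _ _ _
      _ ≤ ρ * (bn * (u * p')) := mul_le_mul_right h2 ρ
      _ ≤ ρ * (bn * (u * (ρ * (c * p)))) := by gcongr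
      _ = c * (ρ ^ 2 * bn * (u * p)) := by ring
  exact (ENNReal.mul_le_mul_iff_right hc0 hct).mp h

lemma gm_comb' {c ρ bn q u p v q' p' : ℝ≥0∞} (hc0 : c ≠ 0) (hct : c ≠ ⊤)
    (h1 : c * p ≤ ρ * p') (h2 : u * p' ≤ bn * (q' * v)) (h3 : q' ≤ ρ * (c * q)) :
    u * p ≤ ρ ^ 2 * bn * (q * v) := by
  have h : c * (u * p) ≤ c * (ρ ^ 2 * bn * (q * v)) := by
    calc c * (u * p) = u * (c * p) := by ring
      _ ≤ u * (ρ * p') := mul_le_mul_right h1 u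
      _ = ρ * (u * p') := by ring
      _ ≤ ρ * (bn * (q' * v)) := mul_le_mul_right h2 ρ
      _ ≤ ρ * (bn * ((ρ * (c * q)) * v)) := by gcongr
      _ = c * (ρ ^ 2 * bn * (q * v)) := by ring
  exact (ENNReal.mul_le_mul_iff_right hc0 hct).mp h

end GMAux

/-- Bounded distortion for iterates of a Gibbs-Markov map: there is `B > 0` such that
for every measurable `Z` and every cylinder `[a₀,…,aₙ]` of positive measure,
`m([a₀,…,aₙ] ∩ T^{-(n+1)}Z)/m[a₀,…,aₙ]` is within a factor `B` of
`m(T(aₙ) ∩ Z)/m(T aₙ)`. -/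
theorem gibbs_markov_bounded_distortion_iterates
    [MetricSpace X] [MeasurableSpace X] [BorelSpace X]
    (m : Measure X) [IsProbabilityMeasure m]
    (T : X → X) (α : ι → Set X) (lam : ℝ) (hGM : GibbsMarkov m T α lam) :
    ∃ B : ℝ≥0∞, 0 < B ∧ B ≠ ⊤ ∧
      ∀ (Z : Set X), MeasurableSet Z → ∀ (n : ℕ) (a : Fin (n + 1) → ι),
        0 < m (⋂ i : Fin (n + 1), T^[(i : ℕ)] ⁻¹' α (a i)) →
        B⁻¹ * (m (T '' α (a (Fin.last n)) ∩ Z) / m (T '' α (a (Fin.last n)))) ≤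
          m ((⋂ i : Fin (n + 1), T^[(i : ℕ)] ⁻¹' α (a i)) ∩ T^[n + 1] ⁻¹' Z) /
            m (⋂ i : Fin (n + 1), T^[(i : ℕ)] ⁻¹' α (a i)) ∧
        m ((⋂ i : Fin (n + 1), T^[(i : ℕ)] ⁻¹' α (a i)) ∩ T^[n + 1] ⁻¹' Z) /
            m (⋂ i : Fin (n + 1), T^[(i : ℕ)] ⁻¹' α (a i)) ≤
          B * (m (T '' α (a (Fin.last n)) ∩ Z) / m (T '' α (a (Fin.last n)))) := by
  classical
  have hcount := hGM.countable
  have hT := hGM.measT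
  have hα := hGM.meas
  obtain ⟨g, hgpos, hform, C, hCpos, hdistfull⟩ := hGM.distortion
  choose Gd hGdsub hGdnull hGdbd using hdistfull
  choose Ge hGesub hGenull hGebd using hGM.expand
  obtain ⟨D0, hD0⟩ := Metric.isBounded_iff.mp hGM.bounded
  set D : ℝ := max D0 0 with hD
  have hDnonneg : 0 ≤ D := le_max_right _ _
  have hdistD : ∀ x y : X, dist x y ≤ D :=
    fun x y => le_trans (hD0 (Set.mem_univ x) (Set.mem_univ y)) (le_max_left _ _)
  set K : ℝ := C * D with hK
  have hKnonneg : 0 ≤ K := mul_nonneg hCpos.le hDnonneg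
  have hlam0 : 0 < lam := lt_trans one_pos hGM.one_lt_lam
  set lx : ℝ := lam⁻¹ with hlx
  have hlx0 : 0 ≤ lx := (inv_pos.mpr hlam0).le
  have hlx1 : lx < 1 := inv_lt_one_of_one_lt₀ hGM.one_lt_lam
  set f : X → ℝ≥0∞ := fun x => ENNReal.ofReal (g x)⁻¹ with hf
  -- real-number helpers
  have habs_le : ∀ {u v ε : ℝ}, 0 < v → |1 - u / v| ≤ ε → u ≤ (1 + ε) * v := by
    intro u v ε hv h
    have h2 : u / v ≤ 1 + ε := by
      have := (abs_le.mp h).1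
      linarith
    calc u = (u / v) * v := by field_simp
      _ ≤ (1 + ε) * v := mul_le_mul_of_nonneg_right h2 hv.le
  have hinv : ∀ {a b cc : ℝ}, 0 < a → 0 < b → b ≤ cc * a → a⁻¹ ≤ cc * b⁻¹ := by
    intro a b cc ha hb h
    rw [inv_eq_one_div, ← div_eq_mul_inv, div_le_div_iff₀ ha hb]
    linarith
  -- the dual change-of-variables formula
  have key : ∀ (i : ι) (W : Set X), MeasurableSet W →
      m (T '' α i ∩ W) = ∫⁻ x in α i ∩ T ⁻¹' W, f x ∂m := by
    intro i W hW
    rw [← Set.image_inter_preimage]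
    exact hform i _ Set.inter_subset_left ((hα i).inter (hT hW))
  -- good sets
  set GF : ι → Set X := fun i => Gd i ∩ Ge i with hGF
  have hGFnull : ∀ i, m (α i \ GF i) = 0 := by
    intro i
    have hsub : α i \ GF i ⊆ (α i \ Gd i) ∪ (α i \ Ge i) := by
      rintro x ⟨hxa, hxn⟩
      by_cases h1 : x ∈ Gd i
      · exact Or.inr ⟨hxa, fun h2 => hxn ⟨h1, h2⟩⟩
      · exact Or.inl ⟨hxa, h1⟩
    exact measure_mono_null hsub (measure_union_null (hGdnull i) (hGenull i))
  -- per-atom essential lower bound for f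
  have hδ : ∀ i, ∃ δ : ℝ≥0∞, δ ≠ 0 ∧ ∀ x ∈ Gd i, δ ≤ f x := by
    intro i
    have hGdpos : 0 < m (Gd i) := by
      have h1 : m (α i) ≤ m (Gd i) + m (α i \ Gd i) := by
        refine le_trans (measure_le_inter_add_diff m (α i) (Gd i)) ?_
        rw [Set.inter_eq_self_of_subset_right (hGdsub i)]
      rw [hGdnull i, add_zero] at h1
      exact lt_of_lt_of_le (hGM.pos i) h1
    obtain ⟨y0, hy0⟩ := nonempty_of_measure_ne_zero hGdpos.ne'
    refine ⟨ENNReal.ofReal ((1 + K) * g y0)⁻¹, ?_, ?_⟩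
    · have : 0 < ((1 + K) * g y0)⁻¹ := by
        have := hgpos y0; positivity
      exact (ENNReal.ofReal_pos.mpr this).ne'
    · intro x hx
      have h1 := hGdbd i x hx y0 hy0
      have h2 : C * dist (T x) (T y0) ≤ K := by
        rw [hK]
        exact mul_le_mul_of_nonneg_left (hdistD _ _) hCpos.le
      have h3 : g x ≤ (1 + K) * g y0 := habs_le (hgpos y0) (h1.trans h2)
      exact ENNReal.ofReal_le_ofReal (inv_anti₀ (hgpos x) h3)
  -- nonsingularity
  have nonsing : ∀ N : Set X, m N = 0 → m (T ⁻¹' N) = 0 := by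
    intro N hN
    set N' := toMeasurable m N with hN'
    have hN'meas : MeasurableSet N' := measurableSet_toMeasurable m N
    have hN'0 : m N' = 0 := by rw [hN', measure_toMeasurable]; exact hN
    have hsub : T ⁻¹' N ⊆ (⋃ i, α i)ᶜ ∪ ⋃ i, α i ∩ T ⁻¹' N' := by
      intro x hx
      by_cases hc : x ∈ ⋃ i, α i
      · obtain ⟨i, hi⟩ := Set.mem_iUnion.mp hc
        exact Or.inr (Set.mem_iUnion.mpr ⟨i, hi, subset_toMeasurable m N hx⟩)
      · exact Or.inl hc
    refine measure_mono_null hsub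
      (measure_union_null hGM.cover (measure_iUnion_null fun i => ?_))
    obtain ⟨δ, hδ0, hδle⟩ := hδ i
    have h1 : δ * m (α i ∩ T ⁻¹' N') ≤ ∫⁻ x in α i ∩ T ⁻¹' N', f x ∂m :=
      (gm_lint_bounds m ((hα i).inter (hT hN'meas))
        (measure_mono_null (Set.diff_subset_diff_left Set.inter_subset_left) (hGdnull i))
        (fun x hx => ⟨hδle x hx, le_top⟩)).1
    rw [← key i N' hN'meas] at h1
    have h2 : m (T '' α i ∩ N') = 0 := measure_mono_null Set.inter_subset_right hN'0
    rw [h2] at h1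
    rcases mul_eq_zero.mp (le_antisymm h1 zero_le) with h | h
    · exact absurd h hδ0
    · exact h
  have nonsingIter : ∀ (j : ℕ) (N : Set X), m N = 0 → m (T^[j] ⁻¹' N) = 0 := by
    intro j
    induction j with
    | zero => intro N hN; simpa using hN
    | succ j ih =>
      intro N hN
      rw [Function.iterate_succ, Set.preimage_comp]
      exact nonsing _ (ih N hN)
  -- Markov inclusion
  have markov_incl : ∀ i i' : ι, 0 < m (α i ∩ T ⁻¹' α i') → m (α i' \ T '' α i) = 0 := by
    intro i i' hpos
    obtain ⟨δ, hδ0, hδle⟩ := hδ i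
    have h1 : δ * m (α i ∩ T ⁻¹' α i') ≤ m (T '' α i ∩ α i') := by
      rw [key i (α i') (hα i')]
      exact (gm_lint_bounds m ((hα i).inter (hT (hα i')))
        (measure_mono_null (Set.diff_subset_diff_left Set.inter_subset_left) (hGdnull i))
        (fun x hx => ⟨hδle x hx, le_top⟩)).1
    have hpos2 : 0 < m (T '' α i ∩ α i') :=
      lt_of_lt_of_le (ENNReal.mul_pos hδ0 hpos.ne') h1
    obtain ⟨s, hs⟩ := hGM.markov i
    by_cases hmem : i' ∈ s
    · refine measure_mono_null (fun x hx => ?_) hs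
      rw [Set.mem_symmDiff]
      exact Or.inr ⟨Set.mem_biUnion hmem hx.1, hx.2⟩
    · exfalso
      have hdisj : ∀ x ∈ ⋃ j ∈ s, α j, x ∉ α i' := by
        intro x hx hx'
        obtain ⟨j, hj, hxj⟩ : ∃ j ∈ s, x ∈ α j := by simpa using hx
        exact Set.disjoint_left.mp
          (hGM.disj (show j ≠ i' from fun h => hmem (h ▸ hj))) hxj hx'
      have hsub2 : T '' α i ∩ α i' ⊆ symmDiff (T '' α i) (⋃ j ∈ s, α j) := by
        intro x hx
        rw [Set.mem_symmDiff]
        exact Or.inl ⟨hx.1, fun hU => hdisj x hU hx.2⟩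
      exact absurd (measure_mono_null hsub2 hs) hpos2.ne'
  -- image of each atom has positive measure
  have himg : ∀ i, 0 < m (T '' α i) := by
    intro i
    obtain ⟨δ, hδ0, hδle⟩ := hδ i
    have hkey := key i Set.univ MeasurableSet.univ
    simp only [Set.inter_univ, Set.preimage_univ] at hkey
    have h1 : δ * m (α i) ≤ m (T '' α i) := by
      rw [hkey]
      exact (gm_lint_bounds m (hα i) (hGdnull i) fun x hx => ⟨hδle x hx, le_top⟩).1
    exact lt_of_lt_of_le (ENNReal.mul_pos hδ0 (hGM.pos i).ne') h1
  -- THE STEP ESTIMATE: distortion on a cylinder of length n+1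
  have STEP : ∀ (n : ℕ) (a : Fin (n + 1) → ι), 0 < m (gmCyl T α n a) →
      ∃ c : ℝ≥0∞, c ≠ 0 ∧ c ≠ ⊤ ∧ ∀ s : Set X, MeasurableSet s → s ⊆ gmCyl T α n a →
        c * m s ≤ ENNReal.ofReal (1 + K * lx ^ n) * ∫⁻ x in s, f x ∂m ∧
        ∫⁻ x in s, f x ∂m ≤ ENNReal.ofReal (1 + K * lx ^ n) * (c * m s) := by
    intro n a hpos
    set P := gmCyl T α n a with hP
    have hPmeas : MeasurableSet P := gmCyl_measurable hT hα n a
    set Gs : Set X := P ∩ ⋂ j : Fin (n + 1), T^[(j : ℕ)] ⁻¹' GF (a j) with hGs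
    have hGsP : Gs ⊆ P := Set.inter_subset_left
    have hGsnull : m (P \ Gs) = 0 := by
      have hsub : P \ Gs ⊆ ⋃ j : Fin (n + 1), T^[(j : ℕ)] ⁻¹' (α (a j) \ GF (a j)) := by
        rintro x ⟨hxP, hxn⟩
        have h1 : ¬ x ∈ ⋂ j : Fin (n + 1), T^[(j : ℕ)] ⁻¹' GF (a j) :=
          fun h => hxn ⟨hxP, h⟩
        rw [Set.mem_iInter] at h1
        push_neg at h1
        obtain ⟨j, hj⟩ := h1
        exact Set.mem_iUnion.mpr ⟨j, Set.mem_iInter.mp hxP j, hj⟩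
      exact measure_mono_null hsub (measure_iUnion_null fun j =>
        nonsingIter _ _ (hGFnull (a j)))
    have hGspos : 0 < m Gs := by
      have h1 : m P ≤ m Gs + m (P \ Gs) := by
        refine le_trans (measure_le_inter_add_diff m P Gs) ?_
        rw [Set.inter_eq_self_of_subset_right hGsP]
      rw [hGsnull, add_zero] at h1
      exact lt_of_lt_of_le hpos h1
    obtain ⟨x0, hx0⟩ := nonempty_of_measure_ne_zero hGspos.ne'
    have hGsmem : ∀ y ∈ Gs, ∀ k : ℕ, ∀ hk : k < n + 1, T^[k] y ∈ GF (a ⟨k, hk⟩) := by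
      intro y hy k hk
      have := Set.mem_iInter.mp hy.2 ⟨k, hk⟩
      simpa using this
    -- distance estimate
    have hdistTxy : ∀ y ∈ Gs, C * dist (T y) (T x0) ≤ K * lx ^ n := by
      intro y hy
      have hiter : ∀ k : ℕ, k ≤ n →
          lam ^ k * dist (T y) (T x0) ≤ dist (T^[k + 1] y) (T^[k + 1] x0) := by
        intro k
        induction k with
        | zero => intro _; simpa using le_refl (dist (T y) (T x0))
        | succ k ih =>
          intro hk
          have h1 := ih (Nat.le_of_succ_le hk)
          have hy1 : T^[k + 1] y ∈ GF (a ⟨k + 1, by omega⟩) :=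
            hGsmem y hy (k + 1) (by omega)
          have hx1 : T^[k + 1] x0 ∈ GF (a ⟨k + 1, by omega⟩) :=
            hGsmem x0 hx0 (k + 1) (by omega)
          have hexp := hGebd _ _ hy1.2 _ hx1.2
          calc lam ^ (k + 1) * dist (T y) (T x0)
              = lam * (lam ^ k * dist (T y) (T x0)) := by ring
            _ ≤ lam * dist (T^[k + 1] y) (T^[k + 1] x0) :=
                mul_le_mul_of_nonneg_left h1 hlam0.le
            _ ≤ dist (T (T^[k + 1] y)) (T (T^[k + 1] x0)) := hexp
            _ = dist (T^[k + 1 + 1] y) (T^[k + 1 + 1] x0) := by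
                rw [Function.iterate_succ_apply' T (k + 1) y,
                  Function.iterate_succ_apply' T (k + 1) x0]
      have h2 := hiter n le_rfl
      have h3 : dist (T^[n + 1] y) (T^[n + 1] x0) ≤ D := hdistD _ _
      have hln : (0 : ℝ) < lam ^ n := pow_pos hlam0 n
      have h4 : dist (T y) (T x0) ≤ D * lx ^ n := by
        rw [hlx, inv_pow, ← div_eq_mul_inv, le_div_iff₀ hln]
        calc dist (T y) (T x0) * lam ^ n = lam ^ n * dist (T y) (T x0) := by ring
          _ ≤ dist (T^[n + 1] y) (T^[n + 1] x0) := h2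
          _ ≤ D := h3
      calc C * dist (T y) (T x0) ≤ C * (D * lx ^ n) :=
            mul_le_mul_of_nonneg_left h4 hCpos.le
        _ = K * lx ^ n := by rw [hK]; ring
    set ε : ℝ := K * lx ^ n with hε
    have hεnonneg : 0 ≤ ε := mul_nonneg hKnonneg (pow_nonneg hlx0 n)
    set ρ : ℝ≥0∞ := ENNReal.ofReal (1 + ε) with hρ
    have hρ0 : ρ ≠ 0 := by
      rw [hρ]
      exact (ENNReal.ofReal_pos.mpr (by linarith)).ne'
    have hρt : ρ ≠ ⊤ := ENNReal.ofReal_ne_top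
    set c : ℝ≥0∞ := ENNReal.ofReal (g x0)⁻¹ with hc
    have hc0 : c ≠ 0 := (ENNReal.ofReal_pos.mpr (inv_pos.mpr (hgpos x0))).ne'
    have hct : c ≠ ⊤ := ENNReal.ofReal_ne_top
    have hbd : ∀ y ∈ Gs, ρ⁻¹ * c ≤ f y ∧ f y ≤ ρ * c := by
      intro y hy
      have hyd : y ∈ Gd (a 0) := by
        have := hGsmem y hy 0 (by omega)
        exact this.1
      have hx0d : x0 ∈ Gd (a 0) := (hGsmem x0 hx0 0 (by omega)).1
      have h1 := hGdbd _ _ hyd _ hx0d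
      have h2 := hGdbd _ _ hx0d _ hyd
      have hd := hdistTxy y hy
      have hgy : g y ≤ (1 + ε) * g x0 := habs_le (hgpos x0) (h1.trans hd)
      have hgx : g x0 ≤ (1 + ε) * g y := by
        refine habs_le (hgpos y) (h2.trans ?_)
        rw [dist_comm]; exact hd
      constructor
      · have hr : (1 + ε)⁻¹ * (g x0)⁻¹ ≤ (g y)⁻¹ := by
          rw [← mul_inv]
          exact inv_anti₀ (hgpos y) hgy
        calc ρ⁻¹ * c = ENNReal.ofReal ((1 + ε)⁻¹ * (g x0)⁻¹) := by
              rw [ENNReal.ofReal_mul (by positivity), ENNReal.ofReal_inv_of_pos (by linarith)]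
          _ ≤ f y := ENNReal.ofReal_le_ofReal hr
      · have hr : (g y)⁻¹ ≤ (1 + ε) * (g x0)⁻¹ := hinv (hgpos y) (hgpos x0) hgx
        rw [hρ, hc, ← ENNReal.ofReal_mul (p := 1 + ε) (by linarith)]
        exact ENNReal.ofReal_le_ofReal hr
    refine ⟨c, hc0, hct, fun s hs hssub => ?_⟩
    obtain ⟨hlow, hhigh⟩ := gm_lint_bounds m hs
      (measure_mono_null (Set.diff_subset_diff_left hssub) hGsnull) hbd
    constructor
    · have h5 := mul_le_mul_right hlow ρ
      rwa [← mul_assoc, ← mul_assoc, ENNReal.mul_inv_cancel hρ0 hρt, one_mul] at h5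
    · rwa [mul_assoc] at hhigh
  -- the product constant
  set bfun : ℕ → ℝ≥0∞ :=
    fun n => ∏ j ∈ Finset.range (n + 1), (ENNReal.ofReal (1 + K * lx ^ j)) ^ 2 with hbfun
  -- MAIN INDUCTION
  have MAIN : ∀ (n : ℕ) (a : Fin (n + 1) → ι), 0 < m (gmCyl T α n a) →
      ∀ Z : Set X, MeasurableSet Z →
        m (gmCyl T α n a ∩ T^[n + 1] ⁻¹' Z) * m (T '' α (a (Fin.last n)))
          ≤ bfun n * (m (T '' α (a (Fin.last n)) ∩ Z) * m (gmCyl T α n a)) ∧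
        m (T '' α (a (Fin.last n)) ∩ Z) * m (gmCyl T α n a)
          ≤ bfun n * (m (gmCyl T α n a ∩ T^[n + 1] ⁻¹' Z) * m (T '' α (a (Fin.last n)))) := by
    intro n
    induction n with
    | zero =>
      intro a hpos Z hZ
      obtain ⟨c, hc0, hct, hcb⟩ := STEP 0 a hpos
      have hu : m (T '' α (a 0) ∩ Z) = ∫⁻ x in α (a 0) ∩ T ⁻¹' Z, f x ∂m := key _ _ hZ
      have hv : m (T '' α (a 0)) = ∫⁻ x in α (a 0), f x ∂m := by
        have h := key (a 0) Set.univ MeasurableSet.univ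
        simpa using h
      obtain ⟨h1a, h1b⟩ := hcb (α (a 0) ∩ T ⁻¹' Z) ((hα _).inter (hT hZ))
        (by rw [gmCyl_zero]; exact Set.inter_subset_left)
      obtain ⟨h2a, h2b⟩ := hcb (α (a 0)) (hα _) (by rw [gmCyl_zero])
      rw [← hu] at h1a h1b
      rw [← hv] at h2a h2b
      have hb0 : bfun 0 = (ENNReal.ofReal (1 + K * lx ^ 0)) ^ 2 * 1 := by
        simp only [hbfun]; simp
      have hcz : gmCyl T α 0 a = α (a 0) := gmCyl_zero T α a
      have hlast : (Fin.last 0 : Fin 1) = 0 := rfl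
      rw [hlast, hcz]
      have hT1 : T^[0 + 1] ⁻¹' Z = T ⁻¹' Z := by
        rw [Function.iterate_one]
      rw [hT1, hb0]
      constructor
      · exact gm_comb hc0 hct h1a (by rw [one_mul]) h2b
      · exact gm_comb' hc0 hct h2a (by rw [one_mul]) h1b
    | succ n ih =>
      intro a hpos Z hZ
      set a' : Fin (n + 1) → ι := a ∘ Fin.succ with ha'
      have hcyl : gmCyl T α (n + 1) a = α (a 0) ∩ T ⁻¹' gmCyl T α n a' :=
        gmCyl_succ T α n a
      have hcylmeas : MeasurableSet (gmCyl T α (n + 1) a) := gmCyl_measurable hT hα _ a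
      have hcylmeas' : MeasurableSet (gmCyl T α n a') := gmCyl_measurable hT hα n a'
      have ha'0 : α (a' 0) = α (a 1) := by
        rw [ha']
        simp [Fin.succ_zero_eq_one]
      have hsubA : gmCyl T α (n + 1) a ⊆ α (a 0) ∩ T ⁻¹' α (a 1) := by
        rw [hcyl]
        refine Set.inter_subset_inter le_rfl (Set.preimage_mono ?_)
        rw [← ha'0]
        exact gmCyl_subset_zero T α n a'
      have hposA : 0 < m (α (a 0) ∩ T ⁻¹' α (a 1)) :=
        lt_of_lt_of_le hpos (measure_mono hsubA)
      have hmk := markov_incl (a 0) (a 1) hposA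
      have hEQ : ∀ W : Set X, MeasurableSet W → W ⊆ α (a 1) →
          m W = ∫⁻ x in α (a 0) ∩ T ⁻¹' W, f x ∂m := by
        intro W hW hWsub
        rw [← key (a 0) W hW]
        refine le_antisymm ?_ (measure_mono Set.inter_subset_right)
        calc m W ≤ m (W ∩ T '' α (a 0)) + m (W \ T '' α (a 0)) :=
              measure_le_inter_add_diff m W (T '' α (a 0))
          _ ≤ m (T '' α (a 0) ∩ W) + 0 := by
              refine add_le_add (measure_mono (by rw [Set.inter_comm])) ?_
              exact le_of_eq (measure_mono_null (Set.diff_subset_diff_left hWsub) hmk)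
          _ = m (T '' α (a 0) ∩ W) := add_zero _
      have hsplit : ∀ Y : Set X,
          α (a 0) ∩ T ⁻¹' (gmCyl T α n a' ∩ T^[n + 1] ⁻¹' Y)
            = gmCyl T α (n + 1) a ∩ T^[n + 1 + 1] ⁻¹' Y := by
        intro Y
        have hit : T^[n + 1 + 1] ⁻¹' Y = T ⁻¹' (T^[n + 1] ⁻¹' Y) := by
          rw [Function.iterate_succ T (n + 1), Set.preimage_comp]
        rw [hcyl, Set.preimage_inter, ← Set.inter_assoc, hit]
      have hq' : m (gmCyl T α n a' ∩ T^[n + 1] ⁻¹' Z)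
          = ∫⁻ x in gmCyl T α (n + 1) a ∩ T^[n + 1 + 1] ⁻¹' Z, f x ∂m := by
        rw [hEQ _ (hcylmeas'.inter ((hT.iterate (n + 1)) hZ))
          (Set.inter_subset_left.trans (by rw [← ha'0]; exact gmCyl_subset_zero T α n a')),
          hsplit Z]
      have hp' : m (gmCyl T α n a') = ∫⁻ x in gmCyl T α (n + 1) a, f x ∂m := by
        rw [hEQ _ hcylmeas' (by rw [← ha'0]; exact gmCyl_subset_zero T α n a'), hcyl]
      obtain ⟨c, hc0, hct, hcb⟩ := STEP (n + 1) a hpos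
      obtain ⟨h1a, h1b⟩ := hcb (gmCyl T α (n + 1) a ∩ T^[n + 1 + 1] ⁻¹' Z)
        (hcylmeas.inter ((hT.iterate (n + 1 + 1)) hZ)) Set.inter_subset_left
      obtain ⟨h2a, h2b⟩ := hcb (gmCyl T α (n + 1) a) hcylmeas le_rfl
      rw [← hq'] at h1a h1b
      rw [← hp'] at h2a h2b
      have hp'pos : 0 < m (gmCyl T α n a') := by
        by_contra hcon
        push_neg at hcon
        have h0 : m (gmCyl T α n a') = 0 := le_antisymm hcon zero_le
        rw [h0, mul_zero] at h2a
        have := le_antisymm h2a zero_le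
        rcases mul_eq_zero.mp this with h | h
        · exact hc0 h
        · exact hpos.ne' h
      have hlast : a' (Fin.last n) = a (Fin.last (n + 1)) := by
        rw [ha']
        simp [Fin.succ_last]
      obtain ⟨ih1, ih2⟩ := ih a' hp'pos Z hZ
      rw [hlast] at ih1 ih2
      have hbs : bfun (n + 1)
          = (ENNReal.ofReal (1 + K * lx ^ (n + 1))) ^ 2 * bfun n := by
        simp only [hbfun]
        rw [Finset.prod_range_succ]
        ring
      rw [hbs]
      exact ⟨gm_comb hc0 hct h1a ih1 h2b, gm_comb' hc0 hct h2a ih2 h1b⟩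
  -- the uniform constant
  set B : ℝ≥0∞ := ENNReal.ofReal (Real.exp (2 * K * (1 - lx)⁻¹)) with hB
  have hB0 : 0 < B := ENNReal.ofReal_pos.mpr (Real.exp_pos _)
  have hBt : B ≠ ⊤ := ENNReal.ofReal_ne_top
  have hbB : ∀ n, bfun n ≤ B := by
    intro n
    have h1 : bfun n
        = ENNReal.ofReal (∏ j ∈ Finset.range (n + 1), (1 + K * lx ^ j) ^ 2) := by
      simp only [hbfun]
      rw [ENNReal.ofReal_prod_of_nonneg (fun j _ => by positivity)]
      refine Finset.prod_congr rfl fun j _ => ?_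
      rw [ENNReal.ofReal_pow (by positivity)]
    rw [h1, hB]
    apply ENNReal.ofReal_le_ofReal
    have hterm : ∀ j ∈ Finset.range (n + 1),
        (1 + K * lx ^ j) ^ 2 ≤ Real.exp (2 * (K * lx ^ j)) := by
      intro j _
      have h2 : 1 + K * lx ^ j ≤ Real.exp (K * lx ^ j) := by
        have := Real.add_one_le_exp (K * lx ^ j)
        linarith
      calc (1 + K * lx ^ j) ^ 2 ≤ (Real.exp (K * lx ^ j)) ^ 2 := by
            apply pow_le_pow_left₀ (by positivity) h2
        _ = Real.exp (2 * (K * lx ^ j)) := by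
            rw [sq, ← Real.exp_add]; ring_nf
    calc ∏ j ∈ Finset.range (n + 1), (1 + K * lx ^ j) ^ 2
        ≤ ∏ j ∈ Finset.range (n + 1), Real.exp (2 * (K * lx ^ j)) :=
          Finset.prod_le_prod (fun j _ => by positivity) hterm
      _ = Real.exp (∑ j ∈ Finset.range (n + 1), 2 * (K * lx ^ j)) :=
          (Real.exp_sum _ _).symm
      _ ≤ Real.exp (2 * K * (1 - lx)⁻¹) := by
          apply Real.exp_le_exp.mpr
          have h1x : (0 : ℝ) < 1 - lx := by linarith
          have hsum : ∑ j ∈ Finset.range (n + 1), lx ^ j ≤ (1 - lx)⁻¹ := by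
            have h2 : (∑ j ∈ Finset.range (n + 1), lx ^ j) * (1 - lx)
                = 1 - lx ^ (n + 1) := by
              have h3 := geom_sum_mul lx (n + 1)
              linear_combination -h3
            rw [← one_div, le_div_iff₀ h1x, h2]
            have : (0 : ℝ) ≤ lx ^ (n + 1) := pow_nonneg hlx0 _
            linarith
          calc ∑ j ∈ Finset.range (n + 1), 2 * (K * lx ^ j)
              = 2 * K * ∑ j ∈ Finset.range (n + 1), lx ^ j := by
                rw [Finset.mul_sum]
                exact Finset.sum_congr rfl fun j _ => by ring
            _ ≤ 2 * K * (1 - lx)⁻¹ :=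
                mul_le_mul_of_nonneg_left hsum (by positivity)
  refine ⟨B, hB0, hBt, ?_⟩
  intro Z hZ n a hpos
  have hrfl : gmCyl T α n a = ⋂ i : Fin (n + 1), T^[(i : ℕ)] ⁻¹' α (a i) := rfl
  rw [← hrfl]
  rw [← hrfl] at hpos
  obtain ⟨hm1, hm2⟩ := MAIN n a hpos Z hZ
  set q := m (gmCyl T α n a ∩ T^[n + 1] ⁻¹' Z) with hq
  set p := m (gmCyl T α n a) with hp
  set u := m (T '' α (a (Fin.last n)) ∩ Z) with hu
  set v := m (T '' α (a (Fin.last n))) with hv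
  have hm1' : q * v ≤ B * (u * p) :=
    hm1.trans (mul_le_mul_left (hbB n) _)
  have hm2' : u * p ≤ B * (q * v) :=
    hm2.trans (mul_le_mul_left (hbB n) _)
  have hp0 : p ≠ 0 := hpos.ne'
  have hpt : p ≠ ⊤ := measure_ne_top m _
  have hv0 : v ≠ 0 := (himg _).ne'
  have hvt : v ≠ ⊤ := measure_ne_top m _
  constructor
  · rw [ENNReal.le_div_iff_mul_le (Or.inl hp0) (Or.inl hpt)]
    have hBv0 : B * v ≠ 0 := (ENNReal.mul_pos hB0.ne' hv0).ne'
    have hBvt : B * v ≠ ⊤ := ENNReal.mul_ne_top hBt hvt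
    have heq : B⁻¹ * (u / v) * p = (u * p) / (B * v) := by
      rw [div_eq_mul_inv, div_eq_mul_inv, ENNReal.mul_inv (Or.inl hB0.ne') (Or.inl hBt)]
      ring
    rw [heq, ENNReal.div_le_iff hBv0 hBvt]
    calc u * p ≤ B * (q * v) := hm2'
      _ = q * (B * v) := by ring
  · rw [ENNReal.div_le_iff hp0 hpt]
    have heq : B * (u / v) * p = (B * (u * p)) / v := by
      rw [div_eq_mul_inv, div_eq_mul_inv]
      ring
    rw [heq, ENNReal.le_div_iff_mul_le (Or.inl hv0) (Or.inl hvt)]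
    exact hm1'
end

section
/- (Lamperti's Borel–Cantelli lemma.) Let (X,m) be a probability space and (Z_n) a sequence of measurable sets with Σ m(Z_n) = ∞ and liminf_{n→∞} [Σ_{j,k=1}^n m(Z_j∩Z_k)] / [Σ_{k=1}^n m(Z_k)]^2 < ∞. Then the set of points belonging to infinitely many Z_n has positive measure. -/
set_option maxHeartbeats 1000000

open MeasureTheory Filter ENNReal Topology


lemma my_cs {X : Type*} [MeasurableSpace X] (m : Measure X)
    (Z : ℕ → Set X) (hmeas : ∀ n, MeasurableSet (Z n)) (s : Finset ℕ) :
    (∑ k ∈ s, m (Z k)) ^ 2 ≤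
      (∑ j ∈ s, ∑ k ∈ s, m (Z j ∩ Z k)) * m (⋃ k ∈ s, Z k) := by
  set F : X → ℝ≥0∞ := fun x => ∑ k ∈ s, (Z k).indicator 1 x with hF
  set U : Set X := ⋃ k ∈ s, Z k with hUdef
  have hUmeas : MeasurableSet U := MeasurableSet.biUnion s.countable_toSet (fun k _ => hmeas k)
  have hind : ∀ k : ℕ, Measurable ((Z k).indicator (1 : X → ℝ≥0∞)) :=
    fun k => measurable_one.indicator (hmeas k)
  have hFmeas : Measurable F := Finset.measurable_sum s (fun k _ => hind k)
  have h1 : ∫⁻ x, F x ∂m = ∑ k ∈ s, m (Z k) := by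
    rw [hF, lintegral_finset_sum s (fun k _ => hind k)]
    exact Finset.sum_congr rfl fun k _ => lintegral_indicator_one (hmeas k)
  have h2 : ∫⁻ x, F x * F x ∂m = ∑ j ∈ s, ∑ k ∈ s, m (Z j ∩ Z k) := by
    have : ∀ x, F x * F x = ∑ j ∈ s, ∑ k ∈ s, (Z j ∩ Z k).indicator (1 : X → ℝ≥0∞) x := by
      intro x
      rw [hF, Finset.sum_mul_sum]
      refine Finset.sum_congr rfl fun j _ => Finset.sum_congr rfl fun k _ => ?_
      rw [Set.inter_indicator_one]; rfl
    simp_rw [this]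
    rw [lintegral_finset_sum s (fun j _ => Finset.measurable_sum s
      (fun k _ => measurable_one.indicator ((hmeas j).inter (hmeas k))))]
    refine Finset.sum_congr rfl fun j _ => ?_
    rw [lintegral_finset_sum s (fun k _ => measurable_one.indicator ((hmeas j).inter (hmeas k)))]
    exact Finset.sum_congr rfl fun k _ => lintegral_indicator_one ((hmeas j).inter (hmeas k))
  have hFU : ∀ x, F x = F x * U.indicator 1 x := by
    intro x
    by_cases hx : x ∈ U
    · rw [Set.indicator_of_mem hx, Pi.one_apply, mul_one]
    · have : F x = 0 := by
        rw [hF]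
        refine Finset.sum_eq_zero fun k hk => Set.indicator_of_notMem (fun hxk => hx ?_) _
        exact Set.mem_biUnion hk hxk
      rw [this, zero_mul]
  have hconj : (2 : ℝ).HolderConjugate 2 := Real.HolderConjugate.two_two
  have holder := ENNReal.lintegral_mul_le_Lp_mul_Lq m hconj hFmeas.aemeasurable
    ((measurable_one.indicator hUmeas : Measurable (U.indicator (1 : X → ℝ≥0∞)))).aemeasurable
  have hg2 : ∀ x, (U.indicator (1 : X → ℝ≥0∞) x) ^ (2 : ℝ) = U.indicator 1 x := by
    intro x
    by_cases hx : x ∈ U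
    · rw [Set.indicator_of_mem hx, Pi.one_apply, ENNReal.one_rpow]
    · rw [Set.indicator_of_notMem hx, ENNReal.zero_rpow_of_pos (by norm_num)]
  have hf2 : ∀ x, (F x) ^ (2 : ℝ) = F x * F x := by
    intro x
    rw [show (2 : ℝ) = ((2 : ℕ) : ℝ) by norm_num, ENNReal.rpow_natCast, sq]
  simp only [Pi.mul_apply] at holder
  rw [show (∫⁻ x, F x * U.indicator 1 x ∂m) = ∫⁻ x, F x ∂m from
    lintegral_congr fun x => (hFU x).symm] at holder
  simp_rw [hf2, hg2] at holder
  rw [h2, lintegral_indicator_one hUmeas] at holder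
  calc (∑ k ∈ s, m (Z k)) ^ 2 = (∫⁻ x, F x ∂m) ^ 2 := by rw [h1]
    _ ≤ ((∑ j ∈ s, ∑ k ∈ s, m (Z j ∩ Z k)) ^ (1/2 : ℝ) * m U ^ (1/2 : ℝ)) ^ 2 :=
        pow_le_pow_left₀ zero_le holder 2
    _ = (∑ j ∈ s, ∑ k ∈ s, m (Z j ∩ Z k)) * m U := by
        rw [mul_pow, ← ENNReal.rpow_natCast (_ ^ (1/2 : ℝ)) 2,
          ← ENNReal.rpow_natCast ((m U) ^ (1/2 : ℝ)) 2, ← ENNReal.rpow_mul, ← ENNReal.rpow_mul]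
        norm_num

/-- Lamperti's Borel–Cantelli lemma: if `∑ m(Zₙ) = ∞` and
`liminf (∑_{j,k=1}^n m(Z_j ∩ Z_k)) / (∑_{k=1}^n m(Z_k))² < ∞`,
then the set of points belonging to infinitely many `Zₙ` has positive measure. -/
theorem lamperti_borel_cantelli {X : Type*} [MeasurableSpace X]
    (m : Measure X) [IsProbabilityMeasure m]
    (Z : ℕ → Set X) (hmeas : ∀ n, MeasurableSet (Z n))
    (hdiv : (∑' n, m (Z n)) = ⊤)
    (hcorr : liminf (fun n : ℕ =>
        (∑ j ∈ Finset.Icc 1 n, ∑ k ∈ Finset.Icc 1 n, m (Z j ∩ Z k)) /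
          (∑ k ∈ Finset.Icc 1 n, m (Z k)) ^ 2) atTop < ⊤) :
    0 < m (limsup Z atTop) := by
  set a : ℕ → ℝ≥0∞ := fun n => ∑ k ∈ Finset.Icc 1 n, m (Z k) with ha
  set b : ℕ → ℝ≥0∞ := fun n => ∑ j ∈ Finset.Icc 1 n, ∑ k ∈ Finset.Icc 1 n, m (Z j ∩ Z k) with hb
  have ha_fin : ∀ n, a n ≠ ⊤ := fun n =>
    (ENNReal.sum_lt_top.2 fun k _ => measure_lt_top m (Z k)).ne
  -- a tends to ⊤
  have ha_top : Tendsto a atTop (𝓝 ⊤) := by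
    have htail : (∑' n : ℕ, m (Z (1 + n))) = ⊤ := by
      have h1 : (∑' n : ℕ, m (Z (1 + n))) = ∑' n : ℕ, m (Z (n + 1)) :=
        tsum_congr fun n => by rw [add_comm]
      rw [h1]
      exact ENNReal.tsum_add_one_eq_top hdiv (measure_ne_top m _)
    have heq : ∀ n, a n = ∑ i ∈ Finset.range n, m (Z (1 + i)) := by
      intro n
      show (∑ k ∈ Finset.Icc 1 n, m (Z k)) = _
      rw [← Finset.Ico_add_one_right_eq_Icc, Finset.sum_Ico_eq_sum_range]
      simp
    rw [show a = fun n => ∑ i ∈ Finset.range n, m (Z (1 + i)) from funext heq, ← htail]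
    exact ENNReal.tendsto_nat_tsum _
  set L := liminf (fun n : ℕ => b n / a n ^ 2) atTop with hL
  set K := L + 1 with hKdef
  have hK_top : K ≠ ⊤ := by
    rw [hKdef]
    exact ENNReal.add_ne_top.2 ⟨hcorr.ne, one_ne_top⟩
  have hK0 : K ≠ 0 := by
    rw [hKdef]
    intro h
    exact one_ne_zero (add_eq_zero.1 h).2
  have hfreq : ∃ᶠ n in atTop, b n / a n ^ 2 < K :=
    frequently_lt_of_liminf_lt (by isBoundedDefault)
      (ENNReal.lt_add_right hcorr.ne one_ne_zero)
  -- the key claim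
  have claim : ∀ N : ℕ, (4 * K)⁻¹ ≤ m (⋃ (k) (_ : N + 1 ≤ k), Z k) := by
    intro N
    set V : Set X := ⋃ (k) (_ : N + 1 ≤ k), Z k with hV
    set c := a N with hc
    have hc_fin : 2 * c ≠ ⊤ := ENNReal.mul_ne_top (by norm_num) (ha_fin N)
    have hev : ∀ᶠ n in atTop, N ≤ n ∧ 2 * c < a n :=
      (eventually_ge_atTop N).and (ha_top.eventually (lt_mem_nhds hc_fin.lt_top))
    obtain ⟨n, hlt, hNn, h2c⟩ := (hfreq.and_eventually hev).exists
    have ha0 : a n ≠ 0 := fun h => by simp [h] at h2c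
    -- split the sum
    have hsplit : Finset.Icc 1 n = Finset.Icc 1 N ∪ Finset.Ioc N n := by
      ext k; simp only [Finset.mem_Icc, Finset.mem_union, Finset.mem_Ioc]; omega
    have hdisj : Disjoint (Finset.Icc 1 N) (Finset.Ioc N n) := by
      rw [Finset.disjoint_left]
      intro k hk hk'
      simp only [Finset.mem_Icc] at hk
      simp only [Finset.mem_Ioc] at hk'
      omega
    set t := ∑ k ∈ Finset.Ioc N n, m (Z k) with ht
    have hat : a n = c + t := by
      show (∑ k ∈ Finset.Icc 1 n, m (Z k)) = c + t
      rw [hsplit, Finset.sum_union hdisj]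
    -- t ≥ a n / 2
    have htge : a n / 2 ≤ t := by
      have h1 : c ≤ a n / 2 := by
        rw [ENNReal.le_div_iff_mul_le (Or.inl two_ne_zero) (Or.inl ENNReal.ofNat_ne_top), mul_comm]
        exact h2c.le
      have h2 : a n - c = t := by rw [hat, ENNReal.add_sub_cancel_left (ha_fin N)]
      calc a n / 2 = a n - a n / 2 := (ENNReal.sub_half (ha_fin n)).symm
        _ ≤ a n - c := tsub_le_tsub_left h1 _
        _ = t := h2
    -- Cauchy-Schwarz on the tail
    have hsub : Finset.Ioc N n ⊆ Finset.Icc 1 n := by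
      intro k hk
      simp only [Finset.mem_Ioc] at hk
      simp only [Finset.mem_Icc]
      omega
    have hcs : t ^ 2 ≤ b n * m V := by
      refine (my_cs m Z hmeas (Finset.Ioc N n)).trans (mul_le_mul ?_ ?_ zero_le zero_le)
      · refine le_trans (Finset.sum_le_sum fun j _ => Finset.sum_le_sum_of_subset hsub) ?_
        exact Finset.sum_le_sum_of_subset hsub
      · refine measure_mono (Set.iUnion₂_subset fun k hk => ?_)
        refine Set.subset_iUnion₂ (s := fun k _ => Z k) k ?_
        simpa using (Finset.mem_Ioc.1 hk).1
    have hbn : b n ≤ K * a n ^ 2 :=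
      ((ENNReal.div_lt_iff (Or.inl (pow_ne_zero 2 ha0))
        (Or.inl (ENNReal.pow_ne_top (ha_fin n)))).1 hlt).le
    have hchain : a n ^ 2 / 4 ≤ K * a n ^ 2 * m V := by
      calc a n ^ 2 / 4 = (a n / 2) ^ 2 := by
            rw [div_eq_mul_inv, div_eq_mul_inv, mul_pow, ← ENNReal.inv_pow]
            norm_num
        _ ≤ t ^ 2 := pow_le_pow_left₀ zero_le htge 2
        _ ≤ b n * m V := hcs
        _ ≤ K * a n ^ 2 * m V := mul_le_mul_left hbn _
    by_contra hcon
    push_neg at hcon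
    have hKa0 : K * a n ^ 2 ≠ 0 := mul_ne_zero hK0 (pow_ne_zero 2 ha0)
    have hKat : K * a n ^ 2 ≠ ⊤ := ENNReal.mul_ne_top hK_top (ENNReal.pow_ne_top (ha_fin n))
    have hstrict : K * a n ^ 2 * m V < K * a n ^ 2 * (4 * K)⁻¹ :=
      ENNReal.mul_lt_mul_right hKa0 hKat hcon
    have hcalc : K * a n ^ 2 * (4 * K)⁻¹ = a n ^ 2 / 4 := by
      rw [ENNReal.mul_inv (Or.inl (by norm_num)) (Or.inl (by norm_num))]
      rw [div_eq_mul_inv]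
      calc K * a n ^ 2 * (4⁻¹ * K⁻¹) = a n ^ 2 * 4⁻¹ * (K * K⁻¹) := by ring
        _ = a n ^ 2 * 4⁻¹ := by rw [ENNReal.mul_inv_cancel hK0 hK_top, mul_one]
    exact absurd (hchain.trans_lt (hstrict.trans_eq hcalc)) (lt_irrefl _)
  -- conclude
  set V : ℕ → Set X := fun N => ⋃ (k) (_ : N ≤ k), Z k with hVdef
  have hanti : Antitone V := by
    intro i j hij
    exact Set.iUnion₂_subset fun k hk => Set.subset_iUnion₂ (s := fun k _ => Z k) k (hij.trans hk)
  have hlimsup : limsup Z atTop = ⋂ N, V N := by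
    rw [limsup_eq_iInf_iSup_of_nat]
    simp only [hVdef, Set.iInf_eq_iInter, Set.iSup_eq_iUnion]
  have htend : Tendsto (fun N => m (V N)) atTop (𝓝 (m (⋂ N, V N))) :=
    tendsto_measure_iInter_atTop
      (fun N => (MeasurableSet.iUnion fun k => MeasurableSet.iUnion fun _ => hmeas k).nullMeasurableSet)
      hanti ⟨0, measure_ne_top m _⟩
  have hpos : (0 : ℝ≥0∞) < (4 * K)⁻¹ :=
    ENNReal.inv_pos.2 (ENNReal.mul_ne_top (by norm_num) hK_top)
  have hge : (4 * K)⁻¹ ≤ m (⋂ N, V N) := by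
    refine ge_of_tendsto' htend fun N => ?_
    exact (claim N).trans (measure_mono (hanti (Nat.le_succ N)))
  rw [hlimsup]
  exact hpos.trans_le hge
end

section
/- Let (X,T,m,α) be a probability preserving Gibbs-Markov map satisfying the uniform lower distortion bound: there is B'>0 such that m([a_0,...,a_{k-1}]∩T^{-k}Z) ≤ B' m(Z) m[a_0,...,a_{k-1}] for all cylinders and measurable Z. Let A ⊂ X be a union of elements of α with m(X∖A) ≤ ε_0 where B'ε_0 < 1. Then for all n ≥ 1, m(∩_{k=0}^{n-1} T^{-k}A) ≥ (1 - B'ε_0)^n. -/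
open MeasureTheory Filter ENNReal

variable {X G ι : Type*}

/-- If `A` is a union of partition elements with `m(X∖A) ≤ ε₀` and the uniform
distortion bound with constant `B'` holds, with `B' ε₀ < 1`, then
`m(∩_{k<n} T^{-k}A) ≥ (1 - B' ε₀)^n`. -/
theorem gibbs_markov_stay_in_A_lower_bound
    [MetricSpace X] [MeasurableSpace X] [BorelSpace X]
    (m : Measure X) [IsProbabilityMeasure m]
    (T : X → X) (hpres : MeasurePreserving T m m)
    (α : ι → Set X) (lam : ℝ) (hGM : GibbsMarkov m T α lam)
    (B' : ℝ) (hB' : 0 < B')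
    (hdist : ∀ (Z : Set X), MeasurableSet Z → ∀ (n : ℕ) (a : Fin (n + 1) → ι),
      m ((⋂ i : Fin (n + 1), T^[(i : ℕ)] ⁻¹' α (a i)) ∩ T^[n + 1] ⁻¹' Z) ≤
        ENNReal.ofReal B' * m Z * m (⋂ i : Fin (n + 1), T^[(i : ℕ)] ⁻¹' α (a i)))
    (A : Set X) (S : Set ι) (hA : A = ⋃ i ∈ S, α i)
    (ε₀ : ℝ) (hε₀ : 0 ≤ ε₀) (hsmall : B' * ε₀ < 1)
    (hAc : m Aᶜ ≤ ENNReal.ofReal ε₀) :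
    ∀ n : ℕ, 1 ≤ n →
      ENNReal.ofReal ((1 - B' * ε₀) ^ n) ≤ m (⋂ k ∈ Finset.range n, T^[k] ⁻¹' A) := by
  classical
  have hmT : Measurable T := hGM.measT
  haveI : Countable ι := hGM.countable
  have hmeasA : MeasurableSet A := by
    rw [hA]; exact MeasurableSet.biUnion (Set.to_countable S) (fun i _ => hGM.meas i)
  -- ι is nonempty
  have hne : Nonempty ι := by
    by_contra h
    rw [not_nonempty_iff] at h
    have hc := hGM.cover
    rw [Set.iUnion_of_empty, Set.compl_empty, measure_univ] at hc
    exact one_ne_zero hc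
  obtain ⟨i0⟩ := hne
  -- B' ≥ 1
  have hB1 : (1:ℝ) ≤ B' := by
    have h := hdist Set.univ MeasurableSet.univ 0 (fun _ => i0)
    have hL : (⋂ i : Fin 1, T^[(i:ℕ)] ⁻¹' α ((fun _ => i0) i)) = α i0 := by
      ext x; simp [Fin.forall_fin_one]
    rw [hL] at h
    simp only [Set.preimage_univ, Set.inter_univ, measure_univ, mul_one] at h
    rw [← ENNReal.one_le_ofReal]
    by_contra hlt
    push_neg at hlt
    have hfin : m (α i0) ≠ ⊤ := (measure_lt_top m _).ne
    have hpos : m (α i0) ≠ 0 := (hGM.pos i0).ne'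
    have : ENNReal.ofReal B' * m (α i0) < 1 * m (α i0) :=
      by rw [mul_comm _ (m (α i0)), mul_comm 1]; exact ENNReal.mul_lt_mul_right hpos hfin hlt
    rw [one_mul] at this
    exact absurd h (not_le.2 this)
  -- cylinders: measurability
  have hmc : ∀ (n : ℕ) (g : Fin n → ι),
      MeasurableSet (⋂ i : Fin n, T^[(i:ℕ)] ⁻¹' α (g i)) :=
    fun n g => MeasurableSet.iInter fun i => (hmT.iterate (i:ℕ)) (hGM.meas (g i))
  -- cylinders: disjointness
  have hdisj : ∀ (n : ℕ), Pairwise (Function.onFun Disjoint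
      (fun g : Fin n → S => ⋂ i : Fin n, T^[(i:ℕ)] ⁻¹' α ((g i : ι)))) := by
    intro n g g' hgg'
    obtain ⟨i, hi⟩ : ∃ i, g i ≠ g' i := by
      by_contra h; push_neg at h; exact hgg' (funext h)
    refine Set.disjoint_left.2 fun x hx hx' => ?_
    have h1 := Set.mem_iInter.1 hx i
    have h2 := Set.mem_iInter.1 hx' i
    exact Set.disjoint_left.1 (hGM.disj (Subtype.coe_injective.ne hi)) h1 h2
  -- decomposition of the intersection into cylinders
  have hdecomp : ∀ n : ℕ, (⋂ i : Fin n, T^[(i:ℕ)] ⁻¹' A)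
      = ⋃ g : Fin n → S, ⋂ i : Fin n, T^[(i:ℕ)] ⁻¹' α ((g i : ι)) := by
    intro n
    have hAsub : A = ⋃ j : S, α (j : ι) := by
      rw [hA, Set.iUnion_subtype]
    calc (⋂ i : Fin n, T^[(i:ℕ)] ⁻¹' A)
        = ⋂ i : Fin n, ⋃ j : S, T^[(i:ℕ)] ⁻¹' α (j : ι) := by
          simp_rw [hAsub, Set.preimage_iUnion]
      _ = ⋃ g : Fin n → S, ⋂ i : Fin n, T^[(i:ℕ)] ⁻¹' α ((g i : ι)) := iInf_iSup_eq
  -- key estimate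
  have key : ∀ k : ℕ, ∀ Z : Set X, MeasurableSet Z →
      m ((⋂ i : Fin (k+1), T^[(i:ℕ)] ⁻¹' A) ∩ T^[k+1] ⁻¹' Z) ≤
        ENNReal.ofReal B' * m Z * m (⋂ i : Fin (k+1), T^[(i:ℕ)] ⁻¹' A) := by
    intro k Z hZ
    calc m ((⋂ i : Fin (k+1), T^[(i:ℕ)] ⁻¹' A) ∩ T^[k+1] ⁻¹' Z)
        = ∑' g : Fin (k+1) → S,
            m ((⋂ i : Fin (k+1), T^[(i:ℕ)] ⁻¹' α ((g i : ι))) ∩ T^[k+1] ⁻¹' Z) := by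
          rw [hdecomp, Set.iUnion_inter]
          exact measure_iUnion
            (fun g g' h => ((hdisj (k+1) h).mono Set.inter_subset_left Set.inter_subset_left))
            (fun g => ((hmc (k+1) _).inter ((hmT.iterate (k+1)) hZ)))
      _ ≤ ∑' g : Fin (k+1) → S,
            ENNReal.ofReal B' * m Z * m (⋂ i : Fin (k+1), T^[(i:ℕ)] ⁻¹' α ((g i : ι))) :=
          ENNReal.tsum_le_tsum fun g => hdist Z hZ k (fun i => (g i : ι))
      _ = ENNReal.ofReal B' * m Z *
            ∑' g : Fin (k+1) → S, m (⋂ i : Fin (k+1), T^[(i:ℕ)] ⁻¹' α ((g i : ι))) :=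
          ENNReal.tsum_mul_left
      _ = ENNReal.ofReal B' * m Z * m (⋂ i : Fin (k+1), T^[(i:ℕ)] ⁻¹' A) := by
          rw [hdecomp, measure_iUnion (hdisj (k+1)) (fun g => hmc (k+1) _)]
  -- translate between Finset.range and Fin forms
  have hE : ∀ n : ℕ, (⋂ k ∈ Finset.range n, T^[k] ⁻¹' A) = ⋂ i : Fin n, T^[(i:ℕ)] ⁻¹' A := by
    intro n; ext x
    simp [Set.mem_iInter, Finset.mem_range, Fin.forall_iff]
  have hAε : ENNReal.ofReal (1 - B' * ε₀) ≤ m A := by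
    have h1 : m A = 1 - m Aᶜ := by
      rw [← prob_compl_eq_one_sub hmeasA.compl, compl_compl]
    have h2 : ENNReal.ofReal ε₀ ≤ ENNReal.ofReal (B' * ε₀) :=
      ENNReal.ofReal_le_ofReal (le_mul_of_one_le_left hε₀ hB1)
    calc ENNReal.ofReal (1 - B' * ε₀)
        = 1 - ENNReal.ofReal (B' * ε₀) := by
          rw [ENNReal.ofReal_sub 1 (mul_nonneg hB'.le hε₀), ENNReal.ofReal_one]
      _ ≤ 1 - m Aᶜ := tsub_le_tsub_left (hAc.trans h2) 1
      _ = m A := h1.symm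
  set c : ℝ≥0∞ := ENNReal.ofReal (B' * ε₀) with hc
  have hc1 : c ≤ 1 := (ENNReal.ofReal_lt_one.2 hsmall).le
  have hofc : ENNReal.ofReal (1 - B' * ε₀) = 1 - c := by
    rw [hc, ENNReal.ofReal_sub 1 (mul_nonneg hB'.le hε₀), ENNReal.ofReal_one]
  -- main induction
  intro n hn
  induction n with
  | zero => omega
  | succ k ih =>
    rcases Nat.eq_zero_or_pos k with hk0 | hk
    · subst hk0
      have h1 : (⋂ i : Fin 1, T^[(i:ℕ)] ⁻¹' A) = A := by
        ext x; simp [Fin.forall_fin_one]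
      rw [hE 1, h1, pow_one]
      exact hAε
    · have ihk := ih hk
      rw [hE] at ihk ⊢
      have hsplit : (⋂ i : Fin (k+1), T^[(i:ℕ)] ⁻¹' A) =
          (⋂ i : Fin k, T^[(i:ℕ)] ⁻¹' A) ∩ T^[k] ⁻¹' A := by
        ext x
        simp only [Set.mem_iInter, Set.mem_inter_iff, Set.mem_preimage, Fin.forall_iff,
          Nat.lt_succ_iff_lt_or_eq]
        constructor
        · intro h; exact ⟨fun i hi => h i (Or.inl hi), h k (Or.inr rfl)⟩
        · rintro ⟨h1, h2⟩ i (hi | rfl)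
          · exact h1 i hi
          · exact h2
      set E : Set X := ⋂ i : Fin k, T^[(i:ℕ)] ⁻¹' A with hEdef
      have hmE : MeasurableSet E :=
        MeasurableSet.iInter fun i => (hmT.iterate (i:ℕ)) hmeasA
      have hx_split : m E = m (E ∩ T^[k] ⁻¹' A) + m (E ∩ T^[k] ⁻¹' Aᶜ) := by
        have := measure_inter_add_diff (μ := m) E ((hmT.iterate k) hmeasA)
        rw [Set.diff_eq, ← Set.preimage_compl] at this
        exact this.symm
      obtain ⟨l, rfl⟩ : ∃ l, k = l + 1 := ⟨k - 1, (Nat.succ_pred_eq_of_pos hk).symm⟩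
      have hbound : m (E ∩ T^[l+1] ⁻¹' Aᶜ) ≤ c * m E := by
        calc m (E ∩ T^[l+1] ⁻¹' Aᶜ)
            ≤ ENNReal.ofReal B' * m Aᶜ * m E := key l Aᶜ hmeasA.compl
          _ ≤ ENNReal.ofReal B' * ENNReal.ofReal ε₀ * m E := by
              gcongr
          _ = c * m E := by rw [hc, ENNReal.ofReal_mul hB'.le]
      -- from  m E ≤ m (E ∩ W) + c * m E  derive  (1-c) * m E ≤ m (E ∩ W)
      have hfin : c * m E ≠ ⊤ :=
        ENNReal.mul_ne_top (by rw [hc]; exact ENNReal.ofReal_ne_top) (measure_ne_top m E)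
      have hle : (1 - c) * m E ≤ m (E ∩ T^[l+1] ⁻¹' A) := by
        rw [← ENNReal.add_le_add_iff_right hfin]
        calc (1 - c) * m E + c * m E = ((1 - c) + c) * m E := (add_mul _ _ _).symm
          _ = m E := by rw [tsub_add_cancel_of_le hc1, one_mul]
          _ ≤ m (E ∩ T^[l+1] ⁻¹' A) + m (E ∩ T^[l+1] ⁻¹' Aᶜ) := hx_split.le
          _ ≤ m (E ∩ T^[l+1] ⁻¹' A) + c * m E := add_le_add le_rfl hbound
      calc ENNReal.ofReal ((1 - B' * ε₀) ^ (l + 1 + 1))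
          = (1 - c) ^ (l + 2) := by
            rw [ENNReal.ofReal_pow (by linarith [mul_nonneg hB'.le hε₀]), hofc]
        _ = (1 - c) * (1 - c) ^ (l + 1) := by ring
        _ ≤ (1 - c) * m E := by
            refine mul_le_mul_right ?_ _
            rw [← hofc, ← ENNReal.ofReal_pow (by linarith [mul_nonneg hB'.le hε₀])] at *
            exact ihk
        _ ≤ m (E ∩ T^[l+1] ⁻¹' A) := hle
        _ = m (⋂ i : Fin (l+1+1), T^[(i:ℕ)] ⁻¹' A) := by rw [hsplit]
end

section
/- Let (X,T,m) be a probability preserving ergodic transformation, α a measurable partition, and β a finite nonempty subset of α with Y = ∪_{b∈β} b. Then for every a ∈ α∖β of positive measure, m(a) = Σ_{n≥1} Σ_{a_0∈β, a_1,...,a_{n-1}∈α∖β} m([a_0,a_1,...,a_{n-1},a]), where [a_0,...,a_n] = ∩_{i=0}^n T^{-i}(a_i). -/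
open MeasureTheory Filter

/-- First-entry decomposition: for an ergodic probability preserving map `T`, a
countable partition `α`, a finite nonempty `β ⊆ α`, and `a ∈ α∖β`,
`m(a) = ∑_{n≥1} ∑_{a₀∈β, a₁,…,a_{n-1}∉β} m[a₀,…,a_{n-1},a]`. -/
theorem first_entry_decomposition {X ι : Type*} [MeasurableSpace X] [Countable ι]
    (m : Measure X) [IsProbabilityMeasure m]
    (T : X → X) (hT : Measurable T)
    (hpres : MeasurePreserving T m m) (herg : Ergodic T m)
    (α : ι → Set X) (hmeas : ∀ i, MeasurableSet (α i))
    (hdisj : Pairwise (Function.onFun Disjoint α))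
    (hcover : m (⋃ i, α i)ᶜ = 0)
    (hpos : ∀ i, 0 < m (α i))
    (β : Finset ι) (hβ : β.Nonempty)
    (i₀ : ι) (hi₀ : i₀ ∉ β) :
    m (α i₀) = ∑' n : ℕ,
      ∑' w : {w : Fin (n + 1) → ι // w 0 ∈ β ∧ ∀ k : Fin (n + 1), (k : ℕ) ≠ 0 → w k ∉ β},
        m ((⋂ k : Fin (n + 1), T^[(k : ℕ)] ⁻¹' α (w.1 k)) ∩ T^[n + 1] ⁻¹' α i₀) := by
  classical
  -- Basic sets
  set Y : Set X := ⋃ i ∈ β, α i with hYdef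
  set Z : Set X := ⋃ i ∈ {j | j ∉ β}, α i with hZdef
  have hYm : MeasurableSet Y := MeasurableSet.biUnion β.countable_toSet (fun i _ => hmeas i)
  have hZm : MeasurableSet Z := MeasurableSet.biUnion (Set.to_countable _) (fun i _ => hmeas i)
  -- disjointness facts
  have hsub : ∀ i ∉ β, α i ⊆ Yᶜ := by
    intro i hi x hx hxY
    simp only [hYdef, Set.mem_iUnion] at hxY
    obtain ⟨j, hj, hxj⟩ := hxY
    have hne : i ≠ j := fun h => hi (h ▸ hj)
    exact (hdisj hne).le_bot ⟨hx, hxj⟩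
  have hZY : Z ⊆ Yᶜ := by
    intro x hx
    simp only [hZdef, Set.mem_iUnion] at hx
    obtain ⟨i, hi, hxi⟩ := hx
    exact hsub i hi hxi
  have hZnull : m (Yᶜ \ Z) = 0 := by
    refine measure_mono_null ?_ hcover
    intro x ⟨hxY, hxZ⟩
    simp only [Set.mem_compl_iff, Set.mem_iUnion, not_exists]
    intro i hxi
    by_cases hi : i ∈ β
    · exact hxY (Set.mem_biUnion hi hxi)
    · exact hxZ (Set.mem_biUnion hi hxi)
  have hTk : ∀ k : ℕ, Measurable (T^[k]) := fun k => hT.iterate k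
  have hYsub : ∀ i ∈ β, α i ⊆ Y := fun i hi => Set.subset_biUnion_of_mem hi
  have hZsub : ∀ i ∉ β, α i ⊆ Z := fun i hi => Set.subset_biUnion_of_mem hi
  -- the key sets
  set E : ℕ → Set X := fun n =>
    (Y ∩ ⋂ k : Fin n, T^[(k : ℕ) + 1] ⁻¹' Yᶜ) ∩ T^[n + 1] ⁻¹' α i₀ with hEdef
  set D : ℕ → Set X := fun n =>
    (Y ∩ ⋂ k : Fin n, T^[(k : ℕ) + 1] ⁻¹' Z) ∩ T^[n + 1] ⁻¹' α i₀ with hDdef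
  set R : ℕ → Set X := fun M =>
    (⋂ k : Fin M, T^[(k : ℕ)] ⁻¹' Yᶜ) ∩ T^[M] ⁻¹' α i₀ with hRdef
  have hEm : ∀ n, MeasurableSet (E n) := fun n =>
    ((hYm.inter (MeasurableSet.iInter fun k => (hTk _) hYm.compl)).inter
      ((hTk _) (hmeas i₀)))
  have hDm : ∀ n, MeasurableSet (D n) := fun n =>
    ((hYm.inter (MeasurableSet.iInter fun k => (hTk _) hZm)).inter
      ((hTk _) (hmeas i₀)))
  have hRm : ∀ M, MeasurableSet (R M) := fun M =>
    ((MeasurableSet.iInter fun k => (hTk _) hYm.compl).inter ((hTk _) (hmeas i₀)))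
  -- Step A: inner tsum equals m (D n)
  have stepA : ∀ n : ℕ,
      (∑' w : {w : Fin (n + 1) → ι // w 0 ∈ β ∧ ∀ k : Fin (n + 1), (k : ℕ) ≠ 0 → w k ∉ β},
        m ((⋂ k : Fin (n + 1), T^[(k : ℕ)] ⁻¹' α (w.1 k)) ∩ T^[n + 1] ⁻¹' α i₀)) = m (D n) := by
    intro n
    set Wt := {w : Fin (n + 1) → ι // w 0 ∈ β ∧ ∀ k : Fin (n + 1), (k : ℕ) ≠ 0 → w k ∉ β}
    set cyl : Wt → Set X := fun w =>
      (⋂ k : Fin (n + 1), T^[(k : ℕ)] ⁻¹' α (w.1 k)) ∩ T^[n + 1] ⁻¹' α i₀ with hcyl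
    have hcylm : ∀ w, MeasurableSet (cyl w) := fun w =>
      (MeasurableSet.iInter fun k => (hTk _) (hmeas _)).inter ((hTk _) (hmeas i₀))
    have hcyld : Pairwise (Function.onFun Disjoint cyl) := by
      intro w w' hww
      have : ∃ k, w.1 k ≠ w'.1 k := by
        by_contra h
        push_neg at h
        exact hww (Subtype.ext (funext h))
      obtain ⟨k, hk⟩ := this
      have hd : Disjoint (T^[(k : ℕ)] ⁻¹' α (w.1 k)) (T^[(k : ℕ)] ⁻¹' α (w'.1 k)) :=
        (hdisj hk).preimage _
      exact hd.mono (Set.inter_subset_left.trans (Set.iInter_subset _ k))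
        (Set.inter_subset_left.trans (Set.iInter_subset _ k))
    have hunion : (⋃ w, cyl w) = D n := by
      ext x
      constructor
      · rintro ⟨_, ⟨w, rfl⟩, hx⟩
        obtain ⟨hx1, hx2⟩ := hx
        refine ⟨⟨?_, ?_⟩, hx2⟩
        · have := Set.mem_iInter.1 hx1 0
          exact hYsub _ w.2.1 (by simpa using this)
        · refine Set.mem_iInter.2 fun k => ?_
          have hk : ((k : ℕ) + 1 : ℕ) < n + 1 := by omega
          have := Set.mem_iInter.1 hx1 ⟨(k : ℕ) + 1, hk⟩
          exact hZsub _ (w.2.2 ⟨(k : ℕ) + 1, hk⟩ (by simp)) this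
      · rintro ⟨⟨hxY, hxZ⟩, hxa⟩
        have key : ∀ k : Fin (n + 1), ∃ i, ((k : ℕ) = 0 → i ∈ β) ∧ ((k : ℕ) ≠ 0 → i ∉ β) ∧
            T^[(k : ℕ)] x ∈ α i := by
          rintro ⟨kv, hkv⟩
          cases kv with
          | zero =>
            simp only [hYdef, Set.mem_iUnion] at hxY
            obtain ⟨i, hi, hxi⟩ := hxY
            exact ⟨i, fun _ => hi, fun h => absurd rfl h, by simpa using hxi⟩
          | succ j =>
            have hj : j < n := by omega
            have := Set.mem_iInter.1 hxZ ⟨j, hj⟩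
            simp only [hZdef, Set.mem_iUnion, Set.mem_preimage] at this
            obtain ⟨i, hi, hxi⟩ := this
            exact ⟨i, fun h => absurd h (by simp), fun _ => hi, hxi⟩
        choose w hw1 hw2 hw3 using key
        refine Set.mem_iUnion.2 ⟨⟨w, hw1 0 rfl, fun k hk => hw2 k hk⟩, ?_⟩
        exact ⟨Set.mem_iInter.2 fun k => hw3 k, hxa⟩
    rw [← measure_iUnion hcyld hcylm, hunion]
  -- Step B : m (D n) = m (E n)
  have stepB : ∀ n, m (D n) = m (E n) := by
    intro n
    have hDE : D n ⊆ E n := by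
      intro x ⟨⟨h1, h2⟩, h3⟩
      exact ⟨⟨h1, Set.mem_iInter.2 fun k => hZY (Set.mem_iInter.1 h2 k)⟩, h3⟩
    have hnull : m (E n \ D n) = 0 := by
      have hsub2 : E n \ D n ⊆ ⋃ k : Fin n, T^[(k : ℕ) + 1] ⁻¹' (Yᶜ \ Z) := by
        rintro x ⟨⟨⟨h1, h2⟩, h3⟩, hnd⟩
        by_contra hc
        simp only [Set.mem_iUnion, Set.mem_preimage, Set.mem_diff, not_exists, not_and,
          not_not] at hc
        refine hnd ⟨⟨h1, Set.mem_iInter.2 fun k => ?_⟩, h3⟩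
        exact hc k (Set.mem_iInter.1 h2 k)
      refine measure_mono_null hsub2 ?_
      refine measure_iUnion_null fun k => ?_
      rw [(hpres.iterate _).measure_preimage (hYm.compl.diff hZm).nullMeasurableSet]
      exact hZnull
    refine le_antisymm (measure_mono hDE) ?_
    calc m (E n) ≤ m (D n ∪ (E n \ D n)) := measure_mono (by
          intro x hx; by_cases h : x ∈ D n
          · exact Or.inl h
          · exact Or.inr ⟨hx, h⟩)
      _ ≤ m (D n) + m (E n \ D n) := measure_union_le _ _
      _ = m (D n) := by rw [hnull, add_zero]
  -- Step C : recursion  m (R M) = m (E M) + m (R (M+1))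
  have stepC : ∀ M, m (R M) = m (E M) + m (R (M + 1)) := by
    intro M
    have hpre : m (R M) = m (T ⁻¹' R M) :=
      (hpres.measure_preimage (hRm M).nullMeasurableSet).symm
    have hsplit : T ⁻¹' R M = E M ∪ R (M + 1) := by
      ext x
      simp only [hRdef, hEdef, Set.mem_preimage, Set.mem_inter_iff, Set.mem_iInter,
        Set.mem_union, Set.mem_compl_iff]
      constructor
      · rintro ⟨h1, h2⟩
        rw [← Function.iterate_succ_apply] at h2
        by_cases hxY : x ∈ Y
        · refine Or.inl ⟨⟨hxY, fun k => ?_⟩, h2⟩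
          have := h1 k
          rwa [← Function.iterate_succ_apply] at this
        · refine Or.inr ⟨fun k => ?_, h2⟩
          rcases k with ⟨kv, hkv⟩
          cases kv with
          | zero => simpa using hxY
          | succ j =>
            have := h1 ⟨j, by omega⟩
            rwa [← Function.iterate_succ_apply] at this
      · rintro (⟨⟨h1, h2⟩, h3⟩ | ⟨h1, h3⟩)
        · refine ⟨fun k => ?_, by rwa [← Function.iterate_succ_apply]⟩
          have := h2 k
          rwa [← Function.iterate_succ_apply]
        · refine ⟨fun k => ?_, by rwa [← Function.iterate_succ_apply]⟩
          have := h1 ⟨(k : ℕ) + 1, by omega⟩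
          rwa [← Function.iterate_succ_apply]
    have hdisjER : Disjoint (E M) (R (M + 1)) := by
      refine Set.disjoint_left.2 fun x hxE hxR => ?_
      have h1 : x ∈ Y := hxE.1.1
      have h2 : x ∈ Yᶜ := by
        have := Set.mem_iInter.1 hxR.1 ⟨0, by omega⟩
        simpa using this
      exact h2 h1
    rw [hpre, hsplit, measure_union hdisjER (hRm (M + 1))]
  -- partial sums
  have keyM : ∀ M, m (α i₀) = (∑ n ∈ Finset.range M, m (E n)) + m (R M) := by
    intro M
    induction M with
    | zero =>
      simp only [Finset.range_zero, Finset.sum_empty, zero_add]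
      congr 1
      rw [hRdef]
      simp [Set.iInter_of_empty]
    | succ M ih =>
      rw [ih, Finset.sum_range_succ, stepC M, add_assoc]
  -- Step D : m (R M) → 0
  set Q : ℕ → Set X := fun M => ⋂ k ∈ Finset.range M, T^[k] ⁻¹' Yᶜ with hQdef
  have hRQ : ∀ M, R M ⊆ Q M := by
    intro M x hx
    simp only [hQdef, Set.mem_iInter, Finset.mem_range]
    intro k hk
    exact Set.mem_iInter.1 hx.1 ⟨k, hk⟩
  set C : Set X := ⋂ k : ℕ, T^[k] ⁻¹' Yᶜ with hCdef
  have hCm : MeasurableSet C := MeasurableSet.iInter fun k => (hTk k) hYm.compl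
  have hCnull : m C = 0 := by
    have hCsub : C ⊆ T ⁻¹' C := by
      intro x hx
      refine Set.mem_iInter.2 fun k => ?_
      have := Set.mem_iInter.1 hx (k + 1)
      simp only [Set.mem_preimage] at this ⊢
      rwa [Function.iterate_succ_apply] at this
    have hCeq : T ⁻¹' C =ᵐ[m] C := by
      rw [Filter.eventuallyEq_set]
      have hmeq : m (T ⁻¹' C) = m C := hpres.measure_preimage hCm.nullMeasurableSet
      have hd : m (T ⁻¹' C \ C) = 0 := by
        rw [measure_diff hCsub hCm.nullMeasurableSet (measure_ne_top m C), hmeq, tsub_self]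
      have : ∀ᵐ x ∂m, x ∉ T ⁻¹' C \ C := by
        rw [ae_iff]; simp only [not_not, Set.setOf_mem_eq]; exact hd
      filter_upwards [this] with x hx
      constructor
      · intro h; by_contra h2; exact hx ⟨h, h2⟩
      · intro h; exact hCsub h
    rcases herg.quasiErgodic.ae_empty_or_univ₀ hCm.nullMeasurableSet hCeq with h | h
    · simpa using measure_congr h
    · exfalso
      have hC1 : m C = 1 := by
        have := measure_congr h
        simpa using this
      obtain ⟨b, hb⟩ := hβ
      have hYsub : α b ⊆ Y := Set.subset_biUnion_of_mem hb
      have hCY : C ⊆ Yᶜ := by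
        intro x hx
        have := Set.mem_iInter.1 hx 0
        simpa using this
      have h1 : (1 : ENNReal) ≤ m Yᶜ := hC1 ▸ measure_mono hCY
      have h2 : m Yᶜ = 1 := le_antisymm prob_le_one h1
      have h3 : m Y = 0 := by
        have heq := measure_add_measure_compl hYm (μ := m)
        rw [h2, measure_univ] at heq
        have h4 : m Y + 1 = 0 + 1 := by rw [heq, zero_add]
        exact WithTop.add_right_cancel ENNReal.one_ne_top h4
      have h5 : m (α b) = 0 := measure_mono_null hYsub h3
      exact (hpos b).ne' h5
  have hQtend : Tendsto (fun M => m (Q M)) atTop (nhds 0) := by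
    have hmono : Antitone Q := by
      intro M N hMN x hx
      simp only [hQdef, Set.mem_iInter, Finset.mem_range] at hx ⊢
      intro k hk
      exact hx k (lt_of_lt_of_le hk hMN)
    have hQm : ∀ M, NullMeasurableSet (Q M) m := fun M =>
      (MeasurableSet.biInter (Finset.range M).countable_toSet
        fun k _ => (hTk k) hYm.compl).nullMeasurableSet
    have := tendsto_measure_iInter_atTop hQm hmono ⟨0, measure_ne_top m _⟩
    have hQC : (⋂ M, Q M) = C := by
      ext x
      simp only [hQdef, hCdef, Set.mem_iInter, Finset.mem_range]
      constructor
      · intro h k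
        exact h (k + 1) k (by omega)
      · intro h M k _
        exact h k
    rw [hQC, hCnull] at this
    exact this
  have hRtend : Tendsto (fun M => m (R M)) atTop (nhds 0) := by
    refine tendsto_of_tendsto_of_tendsto_of_le_of_le tendsto_const_nhds hQtend
      (fun M => zero_le) (fun M => measure_mono (hRQ M))
  -- Conclusion
  have hsum : Tendsto (fun M => ∑ n ∈ Finset.range M, m (E n)) atTop (nhds (∑' n, m (E n))) :=
    ENNReal.tendsto_nat_tsum _
  have hconst : Tendsto (fun M => (∑ n ∈ Finset.range M, m (E n)) + m (R M)) atTop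
      (nhds (m (α i₀))) := by
    simp only [← keyM]
    exact tendsto_const_nhds
  have htot : Tendsto (fun M => (∑ n ∈ Finset.range M, m (E n)) + m (R M)) atTop
      (nhds ((∑' n, m (E n)) + 0)) := hsum.add hRtend
  have : m (α i₀) = ∑' n, m (E n) := by
    have := tendsto_nhds_unique hconst htot
    rwa [add_zero] at this
  rw [this]
  exact tsum_congr fun n => ((stepA n).trans (stepB n)).symm
end

section
/- Let (X,T,m,α) be a probability preserving Gibbs-Markov map with expansion λ>1, f:X→G with Σ m(a)Df(a)<∞, u measurable with f=u-u∘T a.e. and Σ_{a∈α} m(a)Du(a)<∞. Then for every a*∈α* (the partition generated by images of elements of α), Du(a*) ≤ (C/λ)·Σ_{a∈α} m(a)(Df(a)+Du(a)), where C is the constant from the inverse Jacobian bound g(x_n) ≤ C m(a_n). -/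
open MeasureTheory Filter ENNReal

variable {X G ι : Type*}

private lemma essLip_witness [MetricSpace X] [MeasurableSpace X] [PseudoEMetricSpace G]
    (m : Measure X) (f : X → G) (Z : Set X) :
    ∃ Ω : Set X, Ω ⊆ Z ∧ m (Z \ Ω) = 0 ∧
      ∀ x ∈ Ω, ∀ y ∈ Ω, edist (f x) (f y) ≤ essLip m f Z * edist x y := by
  classical
  set s := {C : ℝ≥0∞ | ∃ Ω : Set X, Ω ⊆ Z ∧ m (Z \ Ω) = 0 ∧
    ∀ x ∈ Ω, ∀ y ∈ Ω, edist (f x) (f y) ≤ C * edist x y} with hs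
  have hdef : essLip m f Z = sInf s := rfl
  have htop : (⊤ : ℝ≥0∞) ∈ s := by
    refine ⟨Z, subset_rfl, by simp, fun x hx y hy => ?_⟩
    rcases eq_or_ne (edist x y) 0 with h | h
    · have hxy : x = y := edist_eq_zero.mp h
      subst hxy; simp
    · rw [ENNReal.top_mul h]; exact le_top
  have key : ∀ n : ℕ, ∃ C ∈ s, C ≤ essLip m f Z + ((n : ℝ≥0∞) + 1)⁻¹ := by
    intro n
    rcases eq_or_ne (essLip m f Z) ⊤ with h | h
    · exact ⟨⊤, htop, by simp [h]⟩
    · have hlt : sInf s < essLip m f Z + ((n : ℝ≥0∞) + 1)⁻¹ := by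
        rw [← hdef]; exact ENNReal.lt_add_right h (by simp)
      obtain ⟨Cv, hCv, hClt⟩ := sInf_lt_iff.mp hlt
      exact ⟨Cv, hCv, hClt.le⟩
  choose Cn hCmem hCle using key
  choose Ωn hΩsub hΩnull hΩbd using hCmem
  refine ⟨⋂ n, Ωn n, (Set.iInter_subset _ 0).trans (hΩsub 0), ?_, ?_⟩
  · have hsub : Z \ ⋂ n, Ωn n ⊆ ⋃ n, Z \ Ωn n := by
      intro x hx
      rcases hx with ⟨hxZ, hxI⟩
      rw [Set.mem_iInter] at hxI
      push_neg at hxI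
      obtain ⟨n, hn⟩ := hxI
      exact Set.mem_iUnion.mpr ⟨n, hxZ, hn⟩
    exact measure_mono_null hsub (measure_iUnion_null hΩnull)
  · intro x hx y hy
    have hb : ∀ n : ℕ, edist (f x) (f y) ≤ (essLip m f Z + ((n : ℝ≥0∞) + 1)⁻¹) * edist x y := fun n =>
      (hΩbd n x (Set.mem_iInter.mp hx n) y (Set.mem_iInter.mp hy n)).trans
        (mul_le_mul_left (hCle n) _)
    rcases eq_or_ne (edist x y) 0 with hd0 | hd0
    · have h0 := hb 0
      rw [hd0, mul_zero] at h0
      calc edist (f x) (f y) ≤ 0 := h0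
      _ ≤ _ := zero_le
    · rcases eq_or_ne (essLip m f Z) ⊤ with hc | hc
      · rw [hc, ENNReal.top_mul hd0]; exact le_top
      · refine ENNReal.le_of_forall_pos_le_add fun ε hε _ => ?_
        have hεne : (ε : ℝ≥0∞) / edist x y ≠ 0 :=
          (ENNReal.div_pos (by exact_mod_cast hε.ne') (edist_ne_top x y)).ne'
        obtain ⟨n, hn⟩ := ENNReal.exists_inv_nat_lt hεne
        have hle : ((n : ℝ≥0∞) + 1)⁻¹ ≤ (n : ℝ≥0∞)⁻¹ := ENNReal.inv_le_inv.mpr le_self_add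
        calc edist (f x) (f y) ≤ (essLip m f Z + ((n : ℝ≥0∞) + 1)⁻¹) * edist x y := hb n
        _ = essLip m f Z * edist x y + ((n : ℝ≥0∞) + 1)⁻¹ * edist x y := add_mul _ _ _
        _ ≤ essLip m f Z * edist x y + ((ε : ℝ≥0∞) / edist x y) * edist x y := by
            gcongr
            exact (hle.trans hn.le)
        _ = essLip m f Z * edist x y + ε := by
            rw [ENNReal.div_mul_cancel hd0 (edist_ne_top x y)]

private lemma ae_le_const_of_setLIntegral [MeasurableSpace X] {m : Measure X} [IsFiniteMeasure m]
    {h : X → ℝ≥0∞} (hm : Measurable h) {c : ℝ≥0∞} (hc : c ≠ ⊤)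
    (hb : ∀ B : Set X, MeasurableSet B → ∫⁻ x in B, h x ∂m ≤ c * m B) :
    ∀ᵐ x ∂m, h x ≤ c := by
  have hE : ∀ n : ℕ, m {x | c + ((n : ℝ≥0∞) + 1)⁻¹ ≤ h x} = 0 := by
    intro n
    set q : ℝ≥0∞ := ((n : ℝ≥0∞) + 1)⁻¹ with hq
    have hq0 : q ≠ 0 := ENNReal.inv_ne_zero.mpr (by simp)
    set E := {x | c + q ≤ h x} with hEdef
    have hEmeas : MeasurableSet E := measurableSet_le measurable_const hm
    have h1 : (c + q) * m E ≤ ∫⁻ x in E, h x ∂m := by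
      calc (c + q) * m E = ∫⁻ _x in E, (c + q) ∂m := (setLIntegral_const E _).symm
      _ ≤ ∫⁻ x in E, h x ∂m := lintegral_mono_ae ((ae_restrict_mem hEmeas).mono fun x hx => hx)
    have h3 : c * m E + q * m E ≤ c * m E + 0 := by
      rw [add_zero]
      calc c * m E + q * m E = (c + q) * m E := (add_mul _ _ _).symm
      _ ≤ ∫⁻ x in E, h x ∂m := h1
      _ ≤ c * m E := hb E hEmeas
    have h4 : q * m E ≤ 0 :=
      ENNReal.le_of_add_le_add_left (ENNReal.mul_ne_top hc (measure_ne_top m E)) h3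
    have h5 : q * m E = 0 := le_antisymm h4 zero_le
    rcases mul_eq_zero.mp h5 with h6 | h6
    · exact absurd h6 hq0
    · exact h6
  have hcover : {x | ¬ h x ≤ c} ⊆ ⋃ n : ℕ, {x | c + ((n : ℝ≥0∞) + 1)⁻¹ ≤ h x} := by
    intro x hx
    rw [Set.mem_setOf_eq, not_le] at hx
    have hpos : 0 < h x - c := tsub_pos_iff_lt.mpr hx
    obtain ⟨n, hn⟩ := ENNReal.exists_inv_nat_lt hpos.ne'
    refine Set.mem_iUnion.mpr ⟨n, ?_⟩
    have hle : ((n : ℝ≥0∞) + 1)⁻¹ ≤ (n : ℝ≥0∞)⁻¹ := ENNReal.inv_le_inv.mpr le_self_add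
    show c + ((n : ℝ≥0∞) + 1)⁻¹ ≤ h x
    calc c + ((n : ℝ≥0∞) + 1)⁻¹ ≤ c + (h x - c) := add_le_add_right (hle.trans hn.le) c
    _ = h x := add_tsub_cancel_of_le hx.le
  rw [ae_iff]
  exact measure_mono_null hcover (measure_iUnion_null hE)

private lemma ae_one_le_of_setLIntegral [MeasurableSpace X] {m : Measure X} [IsFiniteMeasure m]
    {h : X → ℝ≥0∞} (hm : Measurable h)
    (hb : ∀ B : Set X, MeasurableSet B → m B ≤ ∫⁻ x in B, h x ∂m) :
    ∀ᵐ x ∂m, 1 ≤ h x := by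
  have hE : ∀ n : ℕ, m {x | h x + ((n : ℝ≥0∞) + 1)⁻¹ ≤ 1} = 0 := by
    intro n
    set q : ℝ≥0∞ := ((n : ℝ≥0∞) + 1)⁻¹ with hq
    have hq0 : q ≠ 0 := ENNReal.inv_ne_zero.mpr (by simp)
    have hq1 : q ≤ 1 := ENNReal.inv_le_one.mpr le_add_self
    set E := {x | h x + q ≤ 1} with hEdef
    have hEmeas : MeasurableSet E := measurableSet_le (hm.add_const q) measurable_const
    have h1 : ∫⁻ x in E, h x ∂m ≤ (1 - q) * m E := by
      calc ∫⁻ x in E, h x ∂m ≤ ∫⁻ _x in E, (1 - q) ∂m :=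
        lintegral_mono_ae ((ae_restrict_mem hEmeas).mono fun x hx => ENNReal.le_sub_of_add_le_right (by simp [hq]) hx)
      _ = (1 - q) * m E := setLIntegral_const E _
    have h3 : (1 - q) * m E + q * m E ≤ (1 - q) * m E + 0 := by
      rw [add_zero]
      calc (1 - q) * m E + q * m E = ((1 - q) + q) * m E := (add_mul _ _ _).symm
      _ = m E := by rw [tsub_add_cancel_of_le hq1, one_mul]
      _ ≤ ∫⁻ x in E, h x ∂m := hb E hEmeas
      _ ≤ (1 - q) * m E := h1
    have hfin : (1 - q) * m E ≠ ⊤ :=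
      ENNReal.mul_ne_top (ne_top_of_le_ne_top one_ne_top tsub_le_self) (measure_ne_top m E)
    have h4 : q * m E ≤ 0 := ENNReal.le_of_add_le_add_left hfin h3
    have h5 : q * m E = 0 := le_antisymm h4 zero_le
    rcases mul_eq_zero.mp h5 with h6 | h6
    · exact absurd h6 hq0
    · exact h6
  have hcover : {x | ¬ (1:ℝ≥0∞) ≤ h x} ⊆ ⋃ n : ℕ, {x | h x + ((n : ℝ≥0∞) + 1)⁻¹ ≤ 1} := by
    intro x hx
    rw [Set.mem_setOf_eq, not_le] at hx
    have hpos : 0 < 1 - h x := tsub_pos_iff_lt.mpr hx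
    obtain ⟨n, hn⟩ := ENNReal.exists_inv_nat_lt hpos.ne'
    refine Set.mem_iUnion.mpr ⟨n, ?_⟩
    have hle : ((n : ℝ≥0∞) + 1)⁻¹ ≤ (n : ℝ≥0∞)⁻¹ := ENNReal.inv_le_inv.mpr le_self_add
    show h x + ((n : ℝ≥0∞) + 1)⁻¹ ≤ 1
    calc h x + ((n : ℝ≥0∞) + 1)⁻¹ ≤ h x + (1 - h x) := add_le_add_right (hle.trans hn.le) _
    _ = 1 := add_tsub_cancel_of_le hx.le
  rw [ae_iff]
  exact measure_mono_null hcover (measure_iUnion_null hE)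

/-- Regularity on the atoms of `α*`: for each atom `a*` of the partition generated by
the images of elements of `α`, `Du(a*) ≤ (C/λ) ∑ m(a)(Df(a) + Du(a))`, where `C` is
the constant from the inverse Jacobian bound `g(xₙ) ≤ C m(aₙ)`. -/
theorem gibbs_markov_Du_atom_bound
    [MetricSpace X] [MeasurableSpace X] [BorelSpace X]
    [MetricSpace G] [AddCommGroup G] [MeasurableSpace G] [BorelSpace G]
    [LocallyCompactSpace G]
    (hinv : ∀ g x y : G, dist (g + x) (g + y) = dist x y)
    (m : Measure X) [IsProbabilityMeasure m]
    (T : X → X) (hpres : MeasurePreserving T m m)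
    (α : ι → Set X) (lam : ℝ) (hGM : GibbsMarkov m T α lam)
    (f u : X → G) (hu : Measurable u)
    (hf : (∑' i, m (α i) * essLip m f (α i)) ≠ ⊤)
    (husum : (∑' i, m (α i) * essLip m u (α i)) ≠ ⊤)
    (hcob : ∀ᵐ x ∂m, f x = u x - u (T x))
    (g : X → ℝ) (hgpos : ∀ x, 0 < g x)
    (hjac : ∀ i, ∀ s : Set X, s ⊆ α i → MeasurableSet s →
      m (T '' s) = ∫⁻ x in s, ENNReal.ofReal (g x)⁻¹ ∂m)
    (hgsum : ∀ᵐ x ∂m, (∑' y : T ⁻¹' {x}, g y) = 1)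
    (C : ℝ) (hC : 0 < C)
    (hCbound : ∀ᵐ x ∂m, ∀ y : X, T y = x → ∀ i, y ∈ α i → g y ≤ C * (m (α i)).toReal) :
    ∀ A : Set X, isImageAtom T α A →
      essLip m u A ≤ ENNReal.ofReal (C / lam) *
        ∑' i, m (α i) * (essLip m f (α i) + essLip m u (α i)) := by
    classical
  haveI : Countable ι := hGM.countable
  intro A hA
  obtain ⟨hAne, S, hAeq⟩ := hA
  by_cases hA0 : m A = 0
  · refine le_trans (sInf_le ?_) zero_le
    exact ⟨∅, Set.empty_subset _, by simpa using hA0, by simp⟩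
  -- per-cell good sets
  choose Ωe hΩe_sub hΩe_null hΩe_exp using hGM.expand
  have hfw : ∀ i, ∃ Ω : Set X, Ω ⊆ α i ∧ m (α i \ Ω) = 0 ∧
      ∀ x ∈ Ω, ∀ y ∈ Ω, edist (f x) (f y) ≤ essLip m f (α i) * edist x y :=
    fun i => essLip_witness m f (α i)
  choose Ωf hΩf_sub hΩf_null hΩf_bd using hfw
  have huw : ∀ i, ∃ Ω : Set X, Ω ⊆ α i ∧ m (α i \ Ω) = 0 ∧
      ∀ x ∈ Ω, ∀ y ∈ Ω, edist (u x) (u y) ≤ essLip m u (α i) * edist x y :=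
    fun i => essLip_witness m u (α i)
  choose Ωu hΩu_sub hΩu_null hΩu_bd using huw
  have hcob0 : m {y | ¬ f y = u y - u (T y)} = 0 := ae_iff.mp hcob
  set Gd : ι → Set X := fun i => Ωe i ∩ Ωf i ∩ Ωu i ∩ {y | f y = u y - u (T y)} with hGd
  have hGd_null : ∀ i, m (α i \ Gd i) = 0 := by
    intro i
    have hsub : α i \ Gd i ⊆
        ((α i \ Ωe i) ∪ (α i \ Ωf i) ∪ (α i \ Ωu i)) ∪ {y | ¬ f y = u y - u (T y)} := by
      intro y hy
      rcases hy with ⟨hyα, hyG⟩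
      simp only [hGd, Set.mem_inter_iff, Set.mem_setOf_eq, not_and_or] at hyG
      simp only [Set.mem_union, Set.mem_diff, Set.mem_setOf_eq]
      tauto
    exact measure_mono_null hsub
      (measure_union_null
        (measure_union_null (measure_union_null (hΩe_null i) (hΩf_null i)) (hΩu_null i)) hcob0)
  -- images of null subsets of cells are null
  have himg : ∀ i (s : Set X), s ⊆ α i → m s = 0 → m (T '' s) = 0 := by
    intro i s hsub hs0
    have ht : MeasurableSet (toMeasurable m s ∩ α i) :=
      (measurableSet_toMeasurable m s).inter (hGM.meas i)
    have ht0 : m (toMeasurable m s ∩ α i) = 0 :=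
      measure_mono_null Set.inter_subset_left (by rw [measure_toMeasurable]; exact hs0)
    have himg0 : m (T '' (toMeasurable m s ∩ α i)) = 0 := by
      rw [hjac i _ Set.inter_subset_right ht, Measure.restrict_eq_zero.mpr ht0,
        lintegral_zero_measure]
    exact measure_mono_null
      (Set.image_mono (Set.subset_inter (subset_toMeasurable m s) hsub)) himg0
  set Dbad : Set X := ⋃ i, T '' (α i \ Gd i) with hDbad
  have hDbad0 : m Dbad = 0 := measure_iUnion_null fun i => himg i _ Set.diff_subset (hGd_null i)
  -- markov hulls
  choose sV hsV using hGM.markov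
  set V : ι → Set X := fun i => ⋃ j ∈ sV i, α j with hV
  have hVmeas : ∀ i, MeasurableSet (V i) :=
    fun i => MeasurableSet.biUnion (Set.to_countable _) fun j _ => hGM.meas j
  have hTV1 : ∀ i, m (T '' α i \ V i) = 0 := by
    intro i
    refine measure_mono_null ?_ (hsV i)
    rw [Set.symmDiff_def]
    exact Set.subset_union_left
  have hTV2 : ∀ i, m (V i \ T '' α i) = 0 := by
    intro i
    refine measure_mono_null ?_ (hsV i)
    rw [Set.symmDiff_def]
    exact Set.subset_union_right
  -- pushforward measures and densities
  set κ : ι → Measure X := fun i => (m.restrict (α i)).map T with hκ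
  have hκapp : ∀ i (B : Set X), MeasurableSet B → κ i B = m (T ⁻¹' B ∩ α i) := by
    intro i B hB
    rw [hκ]
    rw [Measure.map_apply hGM.measT hB, Measure.restrict_apply' (hGM.meas i)]
  have hκle : ∀ i, κ i ≤ m := by
    intro i
    refine Measure.le_iff.mpr fun B hB => ?_
    rw [hκapp i B hB]
    calc m (T ⁻¹' B ∩ α i) ≤ m (T ⁻¹' B) := measure_mono Set.inter_subset_left
    _ = m B := hpres.measure_preimage hB.nullMeasurableSet
  have hκac : ∀ i, κ i ≪ m := fun i => Measure.absolutelyContinuous_of_le (hκle i)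
  haveI : ∀ i, IsFiniteMeasure (κ i) := by
    intro i
    refine ⟨?_⟩
    rw [hκapp i Set.univ MeasurableSet.univ]
    exact lt_of_le_of_lt (measure_mono (Set.subset_univ _)) (measure_lt_top m _)
  set h : ι → X → ℝ≥0∞ := fun i => (κ i).rnDeriv m with hh
  have hhmeas : ∀ i, Measurable (h i) := fun i => Measure.measurable_rnDeriv _ _
  have hκeq : ∀ i, m.withDensity (h i) = κ i :=
    fun i => Measure.withDensity_rnDeriv_eq _ _ (hκac i)
  have hκint : ∀ i (B : Set X), MeasurableSet B → ∫⁻ x in B, h i x ∂m = κ i B := by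
    intro i B hB
    rw [← withDensity_apply _ hB, hκeq i]
  -- the densities sum to 1 a.e.
  have hκsum : ∀ B : Set X, MeasurableSet B → ∑' i, κ i B = m B := by
    intro B hB
    have h1 : m (⋃ i, T ⁻¹' B ∩ α i) = ∑' i, κ i B := by
      rw [measure_iUnion
        (fun i j hij => (hGM.disj hij).mono Set.inter_subset_right Set.inter_subset_right)
        (fun i => (hGM.measT hB).inter (hGM.meas i))]
      exact tsum_congr fun i => (hκapp i B hB).symm
    rw [← h1, ← Set.inter_iUnion, measure_inter_conull hGM.cover,
      hpres.measure_preimage hB.nullMeasurableSet]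
  set F : X → ℝ≥0∞ := fun x => ∑' i, h i x with hF
  have hFone : ∀ᵐ x ∂m, 1 ≤ F x := by
    apply ae_one_le_of_setLIntegral (Measurable.ennreal_tsum hhmeas)
    intro B hB
    calc m B = ∑' i, κ i B := (hκsum B hB).symm
    _ = ∑' i, ∫⁻ x in B, h i x ∂m := tsum_congr fun i => (hκint i B hB).symm
    _ = ∫⁻ x in B, ∑' i, h i x ∂m := (lintegral_tsum fun i => (hhmeas i).aemeasurable).symm
    _ ≤ ∫⁻ x in B, ∑' i, h i x ∂m := le_rfl
  -- a.e. bound on densities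
  have hCb0 : m {x | ¬ ∀ y : X, T y = x → ∀ i, y ∈ α i → g y ≤ C * (m (α i)).toReal} = 0 :=
    ae_iff.mp hCbound
  set Nb := toMeasurable m {x | ¬ ∀ y : X, T y = x → ∀ i, y ∈ α i → g y ≤ C * (m (α i)).toReal}
    with hNb
  have hNb0 : m Nb = 0 := by rw [hNb, measure_toMeasurable]; exact hCb0
  have hNbpre : m (T ⁻¹' Nb) = 0 := by
    rw [hpres.measure_preimage (measurableSet_toMeasurable m _).nullMeasurableSet]
    exact hNb0
  have hgood : ∀ y : X, y ∉ T ⁻¹' Nb → ∀ i, y ∈ α i → g y ≤ C * (m (α i)).toReal := by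
    intro y hy i hyi
    by_contra hgt
    exact hy (subset_toMeasurable m _ (fun hP => hgt (hP y rfl i hyi)))
  have hhle : ∀ i, ∀ᵐ x ∂m, h i x ≤ ENNReal.ofReal C * m (α i) := by
    intro i
    have hctop : ENNReal.ofReal C * m (α i) ≠ ⊤ :=
      ENNReal.mul_ne_top ENNReal.ofReal_ne_top (measure_ne_top m _)
    apply ae_le_const_of_setLIntegral (hhmeas i) hctop
    intro B hB
    rw [hκint i B hB, hκapp i B hB]
    set s : Set X := T ⁻¹' B ∩ α i with hsdef
    have hsmeas : MeasurableSet s := (hGM.measT hB).inter (hGM.meas i)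
    have hpt : ∀ᵐ y ∂m.restrict s,
        (1 : ℝ≥0∞) ≤ ENNReal.ofReal (C * (m (α i)).toReal) * ENNReal.ofReal ((g y)⁻¹) := by
      have h1 : ∀ᵐ y ∂m.restrict s, y ∉ T ⁻¹' Nb :=
        ae_restrict_of_ae (by rw [ae_iff]; simp only [not_not]; exact hNbpre)
      have h2 : ∀ᵐ y ∂m.restrict s, y ∈ s := ae_restrict_mem hsmeas
      filter_upwards [h1, h2] with y hy1 hy2
      have hgy := hgood y hy1 i hy2.2
      have hreal : (1 : ℝ) ≤ (C * (m (α i)).toReal) * (g y)⁻¹ := by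
        rw [← div_eq_mul_inv]
        exact (one_le_div (hgpos y)).mpr hgy
      calc (1 : ℝ≥0∞) = ENNReal.ofReal 1 := by simp
      _ ≤ ENNReal.ofReal ((C * (m (α i)).toReal) * (g y)⁻¹) := ENNReal.ofReal_le_ofReal hreal
      _ = ENNReal.ofReal (C * (m (α i)).toReal) * ENNReal.ofReal ((g y)⁻¹) :=
          ENNReal.ofReal_mul (by positivity)
    calc m s = ∫⁻ _y in s, 1 ∂m := (setLIntegral_one s).symm
    _ ≤ ∫⁻ y in s, ENNReal.ofReal (C * (m (α i)).toReal) * ENNReal.ofReal ((g y)⁻¹) ∂m :=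
        lintegral_mono_ae hpt
    _ = ENNReal.ofReal (C * (m (α i)).toReal) * ∫⁻ y in s, ENNReal.ofReal ((g y)⁻¹) ∂m :=
        lintegral_const_mul' _ _ ENNReal.ofReal_ne_top
    _ = ENNReal.ofReal (C * (m (α i)).toReal) * m (T '' s) := by
        rw [← hjac i s Set.inter_subset_right hsmeas]
    _ ≤ ENNReal.ofReal (C * (m (α i)).toReal) * m B := by
        gcongr
        rintro z ⟨y, hy, rfl⟩
        exact hy.1
    _ = ENNReal.ofReal C * m (α i) * m B := by
        rw [ENNReal.ofReal_mul hC.le, ENNReal.ofReal_toReal (measure_ne_top m _)]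
  -- densities vanish off the hulls
  have hhvan : ∀ i, ∀ᵐ x ∂m, x ∈ (V i)ᶜ → h i x = 0 := by
    intro i
    have hκV : κ i ((V i)ᶜ) = 0 := by
      rw [hκapp i _ (hVmeas i).compl]
      have hsub : T ⁻¹' (V i)ᶜ ∩ α i ⊆ T ⁻¹' (toMeasurable m (T '' α i \ V i)) := by
        rintro y ⟨hyT, hyα⟩
        exact subset_toMeasurable _ _ ⟨Set.mem_image_of_mem T hyα, hyT⟩
      refine measure_mono_null hsub ?_
      rw [hpres.measure_preimage (measurableSet_toMeasurable _ _).nullMeasurableSet,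
        measure_toMeasurable]
      exact hTV1 i
    have hz : ∫⁻ x in (V i)ᶜ, h i x ∂m = 0 := by rw [hκint i _ (hVmeas i).compl, hκV]
    have hz' : h i =ᶠ[ae (m.restrict (V i)ᶜ)] 0 := (lintegral_eq_zero_iff (hhmeas i)).mp hz
    exact (ae_restrict_iff' (hVmeas i).compl).mp hz'
  -- pick a good point of A
  have haeAll : ∀ᵐ x ∂m, 1 ≤ F x ∧
      ∀ i, (h i x ≤ ENNReal.ofReal C * m (α i)) ∧ (x ∈ (V i)ᶜ → h i x = 0) :=
    hFone.and (ae_all_iff.mpr fun i => (hhle i).and (hhvan i))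
  set Nset := {x | ¬ (1 ≤ F x ∧
      ∀ i, (h i x ≤ ENNReal.ofReal C * m (α i)) ∧ (x ∈ (V i)ᶜ → h i x = 0))} with hNset
  have hNset0 : m Nset = 0 := ae_iff.mp haeAll
  set W0 : Set X := ⋃ i, (V i \ T '' α i) with hW0
  have hW00 : m W0 = 0 := measure_iUnion_null fun i => hTV2 i
  have hAnotsub : ¬ A ⊆ Nset ∪ W0 := by
    intro hsub
    exact hA0 (measure_mono_null hsub (measure_union_null hNset0 hW00))
  obtain ⟨x₀, hx₀A, hx₀n⟩ := Set.not_subset.mp hAnotsub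
  have hx₀N : x₀ ∉ Nset := fun hh' => hx₀n (Set.mem_union_left _ hh')
  have hx₀W : x₀ ∉ W0 := fun hh' => hx₀n (Set.mem_union_right _ hh')
  have hx₀good : 1 ≤ F x₀ ∧
      ∀ i, (h i x₀ ≤ ENNReal.ofReal C * m (α i)) ∧ (x₀ ∈ (V i)ᶜ → h i x₀ = 0) :=
    not_not.mp hx₀N
  -- the constant inequality
  have hxA' : x₀ ∈ (⋂ i ∈ S, T '' α i) ∩ (⋂ i ∈ Sᶜ, (T '' α i)ᶜ) := by
    rw [← hAeq]; exact hx₀A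
  have hconst : (1 : ℝ≥0∞) ≤ ∑' (i : ↥S), ENNReal.ofReal C * m (α i) := by
    have hterm : ∀ i, h i x₀ ≤ S.indicator (fun i => ENNReal.ofReal C * m (α i)) i := by
      intro i
      by_cases hi : i ∈ S
      · rw [Set.indicator_of_mem hi]
        exact (hx₀good.2 i).1
      · rw [Set.indicator_of_notMem hi]
        have hxnT : x₀ ∉ T '' α i := Set.mem_iInter₂.mp hxA'.2 i hi
        have hxv : x₀ ∈ (V i)ᶜ := by
          intro hxv
          exact hx₀W (Set.mem_iUnion.mpr ⟨i, hxv, hxnT⟩)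
        rw [(hx₀good.2 i).2 hxv]
    calc (1 : ℝ≥0∞) ≤ F x₀ := hx₀good.1
    _ ≤ ∑' i, S.indicator (fun i => ENNReal.ofReal C * m (α i)) i := ENNReal.tsum_le_tsum hterm
    _ = ∑' (i : ↥S), ENNReal.ofReal C * m (α i) := (tsum_subtype S _).symm
  -- final: exhibit the witness set
  have hlam0 : (0 : ℝ) < lam := lt_trans one_pos hGM.one_lt_lam
  refine sInf_le ?_
  refine ⟨A \ Dbad, Set.diff_subset, ?_, ?_⟩
  · refine measure_mono_null ?_ hDbad0
    intro x hx
    by_contra hxd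
    exact hx.2 ⟨hx.1, hxd⟩
  · intro x hx y hy
    have hx' : x ∈ (⋂ i ∈ S, T '' α i) ∩ (⋂ i ∈ Sᶜ, (T '' α i)ᶜ) := by
      rw [← hAeq]; exact hx.1
    have hy' : y ∈ (⋂ i ∈ S, T '' α i) ∩ (⋂ i ∈ Sᶜ, (T '' α i)ᶜ) := by
      rw [← hAeq]; exact hy.1
    have key : ∀ i ∈ S, edist (u x) (u y) ≤
        (essLip m f (α i) + essLip m u (α i)) * (ENNReal.ofReal lam⁻¹ * edist x y) := by
      intro i hiS
      obtain ⟨xi, hxiα, hxiT⟩ := Set.mem_iInter₂.mp hx'.1 i hiS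
      obtain ⟨yi, hyiα, hyiT⟩ := Set.mem_iInter₂.mp hy'.1 i hiS
      have hxiG : xi ∈ Gd i := by
        by_contra hxg
        exact hx.2 (Set.mem_iUnion.mpr ⟨i, ⟨xi, ⟨hxiα, hxg⟩, hxiT⟩⟩)
      have hyiG : yi ∈ Gd i := by
        by_contra hyg
        exact hy.2 (Set.mem_iUnion.mpr ⟨i, ⟨yi, ⟨hyiα, hyg⟩, hyiT⟩⟩)
      obtain ⟨⟨⟨hxie, hxif⟩, hxiu⟩, hxic⟩ := hxiG
      obtain ⟨⟨⟨hyie, hyif⟩, hyiu⟩, hyic⟩ := hyiG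
      have hux : u x = u xi - f xi := by
        have hfx : f xi = u xi - u x := by rw [← hxiT]; exact hxic
        rw [hfx]; abel
      have huy : u y = u yi - f yi := by
        have hfy : f yi = u yi - u y := by rw [← hyiT]; exact hyic
        rw [hfy]; abel
      have e1 : dist (u xi - f xi) (u yi - f xi) = dist (u xi) (u yi) := by
        simp only [sub_eq_neg_add]
        exact hinv _ _ _
      have e2 : dist (u yi - f xi) (u yi - f yi) = dist (f xi) (f yi) := by
        have h2 : dist (u yi - f xi) (u yi - f yi) = dist (-(f xi)) (-(f yi)) := by
          simp only [sub_eq_add_neg]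
          exact hinv _ _ _
        have h4 := hinv (f xi + f yi) (-(f xi)) (-(f yi))
        have h5 : f xi + f yi + -(f xi) = f yi := by abel
        have h6 : f xi + f yi + -(f yi) = f xi := by abel
        rw [h5, h6] at h4
        rw [h2, ← h4, dist_comm]
      have hdist3 : dist (u x) (u y) ≤ dist (u xi) (u yi) + dist (f xi) (f yi) := by
        calc dist (u x) (u y) = dist (u xi - f xi) (u yi - f yi) := by rw [hux, huy]
        _ ≤ dist (u xi - f xi) (u yi - f xi) + dist (u yi - f xi) (u yi - f yi) :=
            dist_triangle _ _ _
        _ = dist (u xi) (u yi) + dist (f xi) (f yi) := by rw [e1, e2]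
      have hexp : dist xi yi ≤ lam⁻¹ * dist x y := by
        have h7 := hΩe_exp i xi hxie yi hyie
        rw [hxiT, hyiT] at h7
        rw [inv_mul_eq_div, le_div_iff₀ hlam0]
        linarith
      have hed : edist xi yi ≤ ENNReal.ofReal lam⁻¹ * edist x y := by
        rw [edist_dist, edist_dist, ← ENNReal.ofReal_mul (inv_nonneg.mpr hlam0.le)]
        exact ENNReal.ofReal_le_ofReal hexp
      have hLf := hΩf_bd i xi hxif yi hyif
      have hLu := hΩu_bd i xi hxiu yi hyiu
      calc edist (u x) (u y) = ENNReal.ofReal (dist (u x) (u y)) := edist_dist _ _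
      _ ≤ ENNReal.ofReal (dist (u xi) (u yi) + dist (f xi) (f yi)) :=
          ENNReal.ofReal_le_ofReal hdist3
      _ = ENNReal.ofReal (dist (u xi) (u yi)) + ENNReal.ofReal (dist (f xi) (f yi)) :=
          ENNReal.ofReal_add dist_nonneg dist_nonneg
      _ = edist (u xi) (u yi) + edist (f xi) (f yi) := by rw [← edist_dist, ← edist_dist]
      _ ≤ essLip m u (α i) * edist xi yi + essLip m f (α i) * edist xi yi := add_le_add hLu hLf
      _ = (essLip m f (α i) + essLip m u (α i)) * edist xi yi := by ring
      _ ≤ (essLip m f (α i) + essLip m u (α i)) * (ENNReal.ofReal lam⁻¹ * edist x y) :=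
          mul_le_mul_right hed _
    calc edist (u x) (u y) = 1 * edist (u x) (u y) := (one_mul _).symm
    _ ≤ (∑' (i : ↥S), ENNReal.ofReal C * m (α i)) * edist (u x) (u y) :=
        mul_le_mul_left hconst _
    _ = ∑' (i : ↥S), ENNReal.ofReal C * m (α i) * edist (u x) (u y) :=
        (ENNReal.tsum_mul_right).symm
    _ ≤ ∑' (i : ↥S), ENNReal.ofReal C * m (α i) *
          ((essLip m f (α i) + essLip m u (α i)) * (ENNReal.ofReal lam⁻¹ * edist x y)) :=
        ENNReal.tsum_le_tsum fun i => mul_le_mul_right (key i i.2) _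
    _ = ENNReal.ofReal C * ENNReal.ofReal lam⁻¹ *
          ((∑' (i : ↥S), m (α i) * (essLip m f (α i) + essLip m u (α i))) * edist x y) := by
        rw [← ENNReal.tsum_mul_right, ← ENNReal.tsum_mul_left]
        exact tsum_congr fun i => by ring
    _ ≤ ENNReal.ofReal C * ENNReal.ofReal lam⁻¹ *
          ((∑' i, m (α i) * (essLip m f (α i) + essLip m u (α i))) * edist x y) := by
        gcongr
        calc ∑' (i : ↥S), m (α i) * (essLip m f (α i) + essLip m u (α i))
            = ∑' i, S.indicator (fun i => m (α i) * (essLip m f (α i) + essLip m u (α i))) i :=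
            tsum_subtype S (fun i => m (α i) * (essLip m f (α i) + essLip m u (α i)))
        _ ≤ ∑' i, m (α i) * (essLip m f (α i) + essLip m u (α i)) :=
            ENNReal.tsum_le_tsum fun i => by
              by_cases hi : i ∈ S
              · rw [Set.indicator_of_mem hi]
              · rw [Set.indicator_of_notMem hi]; exact zero_le
    _ = ENNReal.ofReal (C / lam) *
          (∑' i, m (α i) * (essLip m f (α i) + essLip m u (α i))) * edist x y := by
        rw [div_eq_mul_inv, ENNReal.ofReal_mul hC.le]
        ring
end

section
/- Let (X,T,m,α) be a Gibbs-Markov map with the big preimage property: there exist a_1,...,a_n∈α such that every element of α is contained mod 0 in the image of some a_i. Let f:X→G be essentially bounded on each a_i and u:X→G measurable with f=u-u∘T a.e. and u essentially bounded on each a_i. Then u is essentially bounded on X, with ‖u‖_∞ ≤ max_i(‖u|_{a_i}‖_∞ + ‖f|_{a_i}‖_∞). -/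
/-!
Up to a null set, a point `y` of `α j` is the image `T x` of a point `x` of the big-preimage
element `α i` at which the bounds on `u` and `f` and the coboundary equation hold; then
`u y = u x - f x`, and invariance of the metric bounds this by `Mu i + Mf i`. The exceptional
points `y` form a null set because `T` maps null subsets of partition elements to null sets,
the Jacobian being a density.
-/

open MeasureTheory Filter ENNReal

variable {X G ι : Type*}

theorem dist_sub_zero_le_of_dist_add_left [PseudoMetricSpace G] [AddCommGroup G]
    (hinv : ∀ g x y : G, dist (g + x) (g + y) = dist x y) (a b : G) :
    dist (a - b) 0 ≤ dist a 0 + dist b 0 := by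
  have h_shift : dist (a - b) (-b) = dist a 0 := by
    simpa [sub_eq_add_neg, add_comm] using hinv (-b) a 0
  have h_neg : dist (-b) 0 = dist b 0 := by
    simpa [dist_comm] using (hinv b (-b) 0).symm
  calc dist (a - b) 0 ≤ dist (a - b) (-b) + dist (-b) 0 := dist_triangle _ _ _
    _ = dist a 0 + dist b 0 := by rw [h_shift, h_neg]

theorem ae_of_forall_ae_mem_imp [MeasurableSpace X] [Countable ι]
    {m : Measure X} {α : ι → Set X} {P : X → Prop} (hcover : m (⋃ i, α i)ᶜ = 0)
    (h : ∀ i, ∀ᵐ x ∂m, x ∈ α i → P x) : ∀ᵐ x ∂m, P x := by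
  filter_upwards [ae_all_iff.mpr h, measure_eq_zero_iff_ae_notMem.mp hcover] with x hx hcov
  obtain ⟨i, hi⟩ := Set.mem_iUnion.mp (not_not.mp hcov)
  exact hx i hi

namespace GibbsMarkov

variable [MetricSpace X] [MeasurableSpace X] {m : Measure X} {T : X → X} {α : ι → Set X} {lam : ℝ}

theorem measure_image_eq_zero (hGM : GibbsMarkov m T α lam) {i : ι} {s : Set X}
    (hs : s ⊆ α i) (hs0 : m s = 0) : m (T '' s) = 0 := by
  obtain ⟨g, -, hjac, -⟩ := hGM.distortion
  obtain ⟨t, hst, ht, ht0⟩ := exists_measurable_superset_of_null hs0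
  refine measure_mono_null (Set.image_mono (Set.subset_inter hs hst)) ?_
  rw [hjac i _ Set.inter_subset_left ((hGM.meas i).inter ht)]
  exact setLIntegral_measure_zero _ _ (measure_mono_null Set.inter_subset_right ht0)

theorem ae_mem_image_imp_exists (hGM : GibbsMarkov m T α lam) {i : ι} {P : X → Prop}
    (h : ∀ᵐ x ∂m.restrict (α i), P x) :
    ∀ᵐ y ∂m, y ∈ T '' α i → ∃ x ∈ α i, T x = y ∧ P x := by
  have hbad : m {x | x ∈ α i ∧ ¬P x} = 0 := by
    simpa only [ae_iff, Classical.not_imp] using (ae_restrict_iff' (hGM.meas i)).mp h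
  filter_upwards [measure_eq_zero_iff_ae_notMem.mp
    (hGM.measure_image_eq_zero (fun x hx => hx.1) hbad)] with y hy ⟨x, hx, hxy⟩
  exact ⟨x, hx, hxy, by_contra fun hPx => hy ⟨x, ⟨hx, hPx⟩, hxy⟩⟩

end GibbsMarkov

theorem gibbs_markov_essentially_bounded_general
    [MetricSpace X] [MeasurableSpace X]
    [MetricSpace G] [AddCommGroup G]
    (hinv : ∀ g x y : G, dist (g + x) (g + y) = dist x y)
    (m : Measure X)
    (T : X → X)
    (α : ι → Set X) (lam : ℝ) (hGM : GibbsMarkov m T α lam)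
    (F : Finset ι) (hF : F.Nonempty)
    (hbigpre : ∀ j : ι, ∃ i ∈ F, m (α j \ T '' α i) = 0)
    (f u : X → G)
    (hcob : ∀ᵐ x ∂m, f x = u x - u (T x))
    (Mu Mf : ι → ℝ)
    (hMu : ∀ i ∈ F, ∀ᵐ x ∂(m.restrict (α i)), dist (u x) 0 ≤ Mu i)
    (hMf : ∀ i ∈ F, ∀ᵐ x ∂(m.restrict (α i)), dist (f x) 0 ≤ Mf i) :
    ∀ᵐ x ∂m, dist (u x) 0 ≤ F.sup' hF (fun i => Mu i + Mf i) := by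
  have := hGM.countable
  refine ae_of_forall_ae_mem_imp hGM.cover fun j => ?_
  obtain ⟨i, hiF, hji⟩ := hbigpre j
  have hgood : ∀ᵐ x ∂m.restrict (α i),
      dist (u x) 0 ≤ Mu i ∧ dist (f x) 0 ≤ Mf i ∧ f x = u x - u (T x) := by
    filter_upwards [hMu i hiF, hMf i hiF, ae_restrict_of_ae hcob] with x hux hfx hx
    exact ⟨hux, hfx, hx⟩
  filter_upwards [hGM.ae_mem_image_imp_exists hgood, ae_le_set.mpr hji] with y himage hsub hy
  obtain ⟨x, -, rfl, hux, hfx, hcobx⟩ := himage (hsub hy)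
  calc dist (u (T x)) 0 = dist (u x - f x) 0 := by rw [hcobx, sub_sub_self]
    _ ≤ dist (u x) 0 + dist (f x) 0 := dist_sub_zero_le_of_dist_add_left hinv _ _
    _ ≤ Mu i + Mf i := add_le_add hux hfx
    _ ≤ F.sup' hF (fun i => Mu i + Mf i) := Finset.le_sup' (fun i => Mu i + Mf i) hiF

/-- Essential boundedness from the big preimage property: if every element of `α` is
contained mod 0 in the image of one of `a₁,…,aₙ ∈ α`, and `f`, `u` are essentially
bounded on each `aᵢ`, with `f = u - u ∘ T` a.e., then `u` is essentially bounded,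
with bound `maxᵢ (‖u|_{aᵢ}‖_∞ + ‖f|_{aᵢ}‖_∞)`. -/
theorem gibbs_markov_essentially_bounded
    [MetricSpace X] [MeasurableSpace X] [BorelSpace X]
    [MetricSpace G] [AddCommGroup G] [MeasurableSpace G] [BorelSpace G]
    [LocallyCompactSpace G]
    (hinv : ∀ g x y : G, dist (g + x) (g + y) = dist x y)
    (m : Measure X) [IsProbabilityMeasure m]
    (T : X → X)
    (α : ι → Set X) (lam : ℝ) (hGM : GibbsMarkov m T α lam)
    (F : Finset ι) (hF : F.Nonempty)
    (hbigpre : ∀ j : ι, ∃ i ∈ F, m (α j \ T '' α i) = 0)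
    (f u : X → G) (hu : Measurable u)
    (hcob : ∀ᵐ x ∂m, f x = u x - u (T x))
    (Mu Mf : ι → ℝ)
    (hMu : ∀ i ∈ F, ∀ᵐ x ∂(m.restrict (α i)), dist (u x) 0 ≤ Mu i)
    (hMf : ∀ i ∈ F, ∀ᵐ x ∂(m.restrict (α i)), dist (f x) 0 ≤ Mf i) :
    ∀ᵐ x ∂m, dist (u x) 0 ≤ F.sup' hF (fun i => Mu i + Mf i) :=
  gibbs_markov_essentially_bounded_general hinv m T α lam hGM F hF hbigpre f u hcob Mu Mf hMu hMf
end

section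
/- Let (X,T,m,d) be a Young tower and f:X→G with Σ m(Δ_{k,l})Df(Δ_{k,l})<∞. Define the induced function f_Y on Y=Δ_0 by f_Y(x) = Σ_{k=0}^{φ(x)-1} f(T^k x), where φ is the first return time. Then with respect to the induced metric d'(x,y)=d(T^{R_l}x,T^{R_l}y) on Δ_{0,l}, one has Df_Y(Δ_{0,l}) ≤ C·Σ_{k=0}^{R_l-1} Df(Δ_{k,l}) for a uniform constant C, and hence Σ_l m(Δ_{0,l})·Df_Y(Δ_{0,l}) < ∞. Moreover if f = u - u∘T a.e. then f_Y = u - u∘T_Y a.e. on Y. -/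
open MeasureTheory Filter ENNReal

variable {X G : Type*}

/-- A Young tower: a partition `{Δ k l : l ∈ ℕ, 0 ≤ k < R l}` of a bounded metric
probability space, `T` moving `Δ k l` isomorphically and measure-preservingly to
`Δ (k+1) l` and sending the top level `Δ (R l - 1) l` isomorphically onto the base
`Δ₀ = ⋃ Δ 0 l`, the return maps to the base being uniformly expanding (factor `lam > 1`),
with backward contraction constant `C` and bounded distortion of returns. -/
structure YoungTower [MetricSpace X] [MeasurableSpace X]
    (m : Measure X) (T : X → X) (R : ℕ → ℕ) (Δ : ℕ → ℕ → Set X) (lam C : ℝ) : Prop where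
  bounded : Bornology.IsBounded (Set.univ : Set X)
  measT : Measurable T
  Rpos : ∀ l, 0 < R l
  meas : ∀ k l, MeasurableSet (Δ k l)
  triv : ∀ k l, R l ≤ k → Δ k l = ∅
  pos : ∀ l, 0 < m (Δ 0 l)
  disj : ∀ k l k' l', (k, l) ≠ (k', l') → Disjoint (Δ k l) (Δ k' l')
  cover : m (⋃ l, ⋃ k ∈ Finset.range (R l), Δ k l)ᶜ = 0
  step : ∀ l k, k + 1 < R l → Set.BijOn T (Δ k l) (Δ (k+1) l) ∧
      ∀ s : Set X, s ⊆ Δ k l → MeasurableSet s → m (T '' s) = m s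
  ret : ∀ l, Set.BijOn T (Δ (R l - 1) l) (⋃ l', Δ 0 l')
  one_lt_lam : 1 < lam
  expand : ∀ l, ∀ x ∈ Δ 0 l, ∀ y ∈ Δ 0 l, lam * dist x y ≤ dist (T^[R l] x) (T^[R l] y)
  Cpos : 0 < C
  back : ∀ l k, k < R l → ∀ x ∈ Δ k l, ∀ y ∈ Δ k l,
      dist x y ≤ C * dist (T^[R l - k] x) (T^[R l - k] y)
  distortion : ∃ g : X → ℝ, (∀ x, 0 < g x) ∧
      (∀ l, ∀ s : Set X, s ⊆ Δ (R l - 1) l → MeasurableSet s →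
        m (T '' s) = ∫⁻ x in s, ENNReal.ofReal (g x)⁻¹ ∂m) ∧
      ∃ C' : ℝ, 0 < C' ∧ ∀ l, ∀ x ∈ Δ (R l - 1) l, ∀ y ∈ Δ (R l - 1) l,
        |1 - g x / g y| ≤ C' * dist (T x) (T y)

/-- The essential Lipschitz constant of `f` on `Z` with respect to an abstract
distance function `ρ`. -/
noncomputable def essLipD [MeasurableSpace X] [PseudoEMetricSpace G]
    (m : Measure X) (ρ : X → X → ℝ) (f : X → G) (Z : Set X) : ℝ≥0∞ :=
  sInf {C : ℝ≥0∞ | ∃ Ω : Set X, Ω ⊆ Z ∧ m (Z \ Ω) = 0 ∧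
    ∀ x ∈ Ω, ∀ y ∈ Ω, edist (f x) (f y) ≤ C * ENNReal.ofReal (ρ x y)}

private lemma dist_add_add_le' [MetricSpace G] [AddCommGroup G]
    (hinv : ∀ g x y : G, dist (g + x) (g + y) = dist x y)
    (a b c d : G) : dist (a + b) (c + d) ≤ dist a c + dist b d := by
  calc dist (a + b) (c + d) ≤ dist (a + b) (c + b) + dist (c + b) (c + d) :=
        dist_triangle _ _ _
    _ = dist a c + dist b d := by
        rw [hinv c b d, add_comm a b, add_comm c b, hinv b a c]

private lemma dist_sum_sum_le' {ι : Type*} [MetricSpace G] [AddCommGroup G]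
    (hinv : ∀ g x y : G, dist (g + x) (g + y) = dist x y)
    (s : Finset ι) (a b : ι → G) :
    dist (∑ i ∈ s, a i) (∑ i ∈ s, b i) ≤ ∑ i ∈ s, dist (a i) (b i) := by
  induction s using Finset.cons_induction with
  | empty => simp
  | cons i s hi ih =>
    simp only [Finset.sum_cons]
    exact le_trans (dist_add_add_le' hinv _ _ _ _) (by gcongr)

/-- The induced function `f_Y(x) = ∑_{k<φ(x)} f(T^k x)` on the base of a Young tower
satisfies `Df_Y(Δ_{0,l}) ≤ C' ∑_{k<R_l} Df(Δ_{k,l})` with respect to the induced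
metric `d'`, for a uniform constant `C'`; hence `∑_l m(Δ_{0,l}) Df_Y(Δ_{0,l}) < ∞`.
Moreover if `f = u - u ∘ T` a.e. then `f_Y = u - u ∘ T_Y` a.e. on `Y`. -/
theorem young_tower_induced_function
    [MetricSpace X] [MeasurableSpace X] [BorelSpace X]
    [MetricSpace G] [AddCommGroup G] [MeasurableSpace G] [BorelSpace G]
    [LocallyCompactSpace G]
    (hinv : ∀ g x y : G, dist (g + x) (g + y) = dist x y)
    (m : Measure X) [IsProbabilityMeasure m]
    (T : X → X) (hpres : MeasurePreserving T m m)
    (R : ℕ → ℕ) (Δ : ℕ → ℕ → Set X) (lam C : ℝ)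
    (hYT : YoungTower m T R Δ lam C)
    (S : X → X) (hS : ∀ l, ∀ x ∈ Δ 0 l, S x = T^[R l] x)
    (ρ : X → X → ℝ)
    (hρ₁ : ∀ l, ∀ x ∈ Δ 0 l, ∀ y ∈ Δ 0 l, ρ x y = dist (T^[R l] x) (T^[R l] y))
    (f : X → G)
    (hf : (∑' l : ℕ, ∑ k ∈ Finset.range (R l), m (Δ k l) * essLip m f (Δ k l)) ≠ ⊤)
    (fY : X → G)
    (hfY : ∀ l, ∀ x ∈ Δ 0 l, fY x = ∑ k ∈ Finset.range (R l), f (T^[k] x)) :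
    (∃ C' : ℝ≥0∞, C' ≠ ⊤ ∧
      (∀ l, essLipD m ρ fY (Δ 0 l) ≤ C' * ∑ k ∈ Finset.range (R l), essLip m f (Δ k l)) ∧
      (∑' l : ℕ, m (Δ 0 l) * essLipD m ρ fY (Δ 0 l)) ≠ ⊤) ∧
    ∀ u : X → G, Measurable u → (∀ᵐ x ∂m, f x = u x - u (T x)) →
      ∀ᵐ x ∂(m.restrict (⋃ l, Δ 0 l)), fY x = u x - u (S x) := by
  have hC0 : 0 < C := hYT.Cpos
  -- T^[k] maps Δ 0 l into Δ k l for k < R l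
  have mapsTo : ∀ l k, k < R l → Set.MapsTo (T^[k]) (Δ 0 l) (Δ k l) := by
    intro l k
    induction k with
    | zero => intro _; simpa using Set.mapsTo_id _
    | succ k ih =>
      intro hk
      have hk' : k < R l := Nat.lt_of_succ_lt hk
      have h1 := (hYT.step l k hk).1.mapsTo
      intro x hx
      rw [Function.iterate_succ_apply']
      exact h1 (ih hk' hx)
  -- measure of levels
  have mΔ : ∀ l k, k < R l → m (Δ k l) = m (Δ 0 l) := by
    intro l k
    induction k with
    | zero => intro _; rfl
    | succ k ih =>
      intro hk
      have hk' : k < R l := Nat.lt_of_succ_lt hk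
      have h1 := (hYT.step l k hk).1.image_eq
      have h2 := (hYT.step l k hk).2 (Δ k l) subset_rfl (hYT.meas k l)
      rw [← h1, h2, ih hk']
  -- null preimages
  have nullpre : ∀ l k, k < R l → ∀ N : Set X, MeasurableSet N → N ⊆ Δ k l → m N = 0 →
      m (Δ 0 l ∩ T^[k] ⁻¹' N) = 0 := by
    intro l k
    induction k with
    | zero =>
      intro _ N _ _ hN0
      refine le_antisymm (le_trans (measure_mono ?_) hN0.le) zero_le
      simp only [Function.iterate_zero, Set.preimage_id]
      exact Set.inter_subset_right
    | succ k ih =>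
      intro hk N hNm hNsub hN0
      have hk' : k < R l := Nat.lt_of_succ_lt hk
      set N' : Set X := Δ k l ∩ T ⁻¹' N with hN'
      have hN'm : MeasurableSet N' := (hYT.meas k l).inter (hYT.measT hNm)
      have hN'0 : m N' = 0 := by
        have h2 := (hYT.step l k hk).2 N' Set.inter_subset_left hN'm
        have : T '' N' ⊆ N := by
          rintro _ ⟨x, hx, rfl⟩; exact hx.2
        have h3 : m (T '' N') ≤ m N := measure_mono this
        rw [h2, hN0] at h3
        exact le_antisymm h3 zero_le
      have hsub : Δ 0 l ∩ T^[k + 1] ⁻¹' N ⊆ Δ 0 l ∩ T^[k] ⁻¹' N' := by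
        rintro x ⟨hx0, hxN⟩
        refine ⟨hx0, mapsTo l k hk' hx0, ?_⟩
        have hxN' : T^[k + 1] x ∈ N := hxN
        rw [Function.iterate_succ_apply'] at hxN'
        exact hxN'
      refine le_antisymm ?_ zero_le
      calc m (Δ 0 l ∩ T^[k + 1] ⁻¹' N) ≤ m (Δ 0 l ∩ T^[k] ⁻¹' N') := measure_mono hsub
        _ = 0 := ih hk' N' hN'm Set.inter_subset_left hN'0
  -- the key Lipschitz estimate
  have key : ∀ l (L : ℕ → ℝ≥0∞) (Ω : ℕ → Set X),
      (∀ k < R l, Ω k ⊆ Δ k l ∧ m (Δ k l \ Ω k) = 0 ∧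
        ∀ x ∈ Ω k, ∀ y ∈ Ω k, edist (f x) (f y) ≤ L k * edist x y) →
      essLipD m ρ fY (Δ 0 l) ≤ ENNReal.ofReal C * ∑ k ∈ Finset.range (R l), L k := by
    intro l L Ω hΩ
    set Ω₀ : Set X := Δ 0 l ∩ ⋂ k ∈ Finset.range (R l), T^[k] ⁻¹' Ω k with hΩ₀def
    have hsub₀ : Ω₀ ⊆ Δ 0 l := Set.inter_subset_left
    have hmem : ∀ x ∈ Ω₀, ∀ k < R l, T^[k] x ∈ Ω k := by
      intro x hx k hk
      have := hx.2
      rw [Set.mem_iInter₂] at this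
      exact this k (Finset.mem_range.mpr hk)
    have hnull : m (Δ 0 l \ Ω₀) = 0 := by
      set N : ℕ → Set X := fun k => toMeasurable m (Δ k l \ Ω k) ∩ Δ k l with hN
      have hsub : Δ 0 l \ Ω₀ ⊆ ⋃ k ∈ Set.Iio (R l), (Δ 0 l ∩ T^[k] ⁻¹' N k) := by
        rintro x ⟨hx0, hx⟩
        have : ∃ k ∈ Finset.range (R l), T^[k] x ∉ Ω k := by
          by_contra h
          push_neg at h
          exact hx ⟨hx0, Set.mem_iInter₂.mpr h⟩
        obtain ⟨k, hk, hknot⟩ := this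
        have hk' := Finset.mem_range.mp hk
        refine Set.mem_biUnion (Set.mem_Iio.mpr hk') ⟨hx0, ?_⟩
        exact ⟨subset_toMeasurable m _ ⟨mapsTo l k hk' hx0, hknot⟩, mapsTo l k hk' hx0⟩
      refine le_antisymm ?_ zero_le
      calc m (Δ 0 l \ Ω₀) ≤ m (⋃ k ∈ Set.Iio (R l), (Δ 0 l ∩ T^[k] ⁻¹' N k)) :=
            measure_mono hsub
        _ = 0 := by
            rw [measure_biUnion_null_iff (Set.to_countable _)]
            intro k hk
            have hk' : k < R l := hk
            refine nullpre l k hk' (N k)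
              ((measurableSet_toMeasurable m _).inter (hYT.meas k l))
              Set.inter_subset_right ?_
            refine le_antisymm ?_ zero_le
            calc m (N k) ≤ m (toMeasurable m (Δ k l \ Ω k)) :=
                  measure_mono Set.inter_subset_left
              _ = m (Δ k l \ Ω k) := measure_toMeasurable _
              _ = 0 := (hΩ k hk').2.1
    refine sInf_le ?_
    refine ⟨Ω₀, hsub₀, hnull, ?_⟩
    intro x hx y hy
    have hρ : ρ x y = dist (T^[R l] x) (T^[R l] y) := hρ₁ l x (hsub₀ hx) y (hsub₀ hy)
    have hdist : ∀ k < R l,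
        edist (T^[k] x) (T^[k] y) ≤ ENNReal.ofReal C * ENNReal.ofReal (ρ x y) := by
      intro k hk
      have hb := hYT.back l k hk (T^[k] x) (mapsTo l k hk (hsub₀ hx))
        (T^[k] y) (mapsTo l k hk (hsub₀ hy))
      have hiter : ∀ z : X, T^[R l - k] (T^[k] z) = T^[R l] z := by
        intro z
        rw [← Function.iterate_add_apply, Nat.sub_add_cancel hk.le]
      rw [hiter x, hiter y] at hb
      rw [edist_dist, hρ, ← ENNReal.ofReal_mul hC0.le]
      exact ENNReal.ofReal_le_ofReal hb
    calc edist (fY x) (fY y)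
        = edist (∑ k ∈ Finset.range (R l), f (T^[k] x))
            (∑ k ∈ Finset.range (R l), f (T^[k] y)) := by
          rw [hfY l x (hsub₀ hx), hfY l y (hsub₀ hy)]
      _ ≤ ∑ k ∈ Finset.range (R l), edist (f (T^[k] x)) (f (T^[k] y)) := by
          rw [edist_dist]
          calc ENNReal.ofReal (dist _ _)
              ≤ ENNReal.ofReal (∑ k ∈ Finset.range (R l),
                  dist (f (T^[k] x)) (f (T^[k] y))) :=
                ENNReal.ofReal_le_ofReal (dist_sum_sum_le' hinv _ _ _)
            _ = ∑ k ∈ Finset.range (R l),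
                  ENNReal.ofReal (dist (f (T^[k] x)) (f (T^[k] y))) :=
                ofReal_sum_of_nonneg fun i _ => dist_nonneg
            _ = ∑ k ∈ Finset.range (R l), edist (f (T^[k] x)) (f (T^[k] y)) := by
                simp [edist_dist]
      _ ≤ ∑ k ∈ Finset.range (R l), L k * (ENNReal.ofReal C * ENNReal.ofReal (ρ x y)) := by
          refine Finset.sum_le_sum fun k hk => ?_
          have hk' := Finset.mem_range.mp hk
          calc edist (f (T^[k] x)) (f (T^[k] y))
              ≤ L k * edist (T^[k] x) (T^[k] y) :=
                (hΩ k hk').2.2 _ (hmem x hx k hk') _ (hmem y hy k hk')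
            _ ≤ L k * (ENNReal.ofReal C * ENNReal.ofReal (ρ x y)) := by
                gcongr
                exact hdist k hk'
      _ = (ENNReal.ofReal C * ∑ k ∈ Finset.range (R l), L k) * ENNReal.ofReal (ρ x y) := by
          rw [← Finset.sum_mul]
          ring
  -- the main bound
  have bound : ∀ l, essLipD m ρ fY (Δ 0 l) ≤
      ENNReal.ofReal C * ∑ k ∈ Finset.range (R l), essLip m f (Δ k l) := by
    intro l
    by_cases htop : ∑ k ∈ Finset.range (R l), essLip m f (Δ k l) = ⊤
    · rw [htop, ENNReal.mul_top (ENNReal.ofReal_pos.mpr hC0).ne']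
      exact le_top
    · apply ENNReal.le_of_forall_pos_le_add
      intro ε hε _
      set K : ℝ≥0∞ := ENNReal.ofReal C * (R l : ℝ≥0∞) with hK
      have hK0 : K ≠ 0 :=
        mul_ne_zero (ENNReal.ofReal_pos.mpr hC0).ne'
          (by exact_mod_cast (hYT.Rpos l).ne')
      have hKt : K ≠ ⊤ := ENNReal.mul_ne_top ENNReal.ofReal_ne_top (ENNReal.natCast_ne_top _)
      set δ : ℝ≥0∞ := (ε : ℝ≥0∞) / K with hδ
      have hδ0 : δ ≠ 0 := (ENNReal.div_pos (by exact_mod_cast hε.ne') hKt).ne'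
      have hex : ∀ k, ∃ (L : ℝ≥0∞) (Ω : Set X), k < R l →
          ((Ω ⊆ Δ k l ∧ m (Δ k l \ Ω) = 0 ∧
            ∀ x ∈ Ω, ∀ y ∈ Ω, edist (f x) (f y) ≤ L * edist x y) ∧
           L ≤ essLip m f (Δ k l) + δ) := by
        intro k
        by_cases hk : k < R l
        · have hfin : essLip m f (Δ k l) ≠ ⊤ := by
            intro h
            exact htop (ENNReal.sum_eq_top.mpr ⟨k, Finset.mem_range.mpr hk, h⟩)
          have hlt2 : essLip m f (Δ k l) < essLip m f (Δ k l) + δ :=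
            ENNReal.lt_add_right hfin hδ0
          have hlt3 : sInf {C : ℝ≥0∞ | ∃ Ω : Set X, Ω ⊆ Δ k l ∧ m (Δ k l \ Ω) = 0 ∧
              ∀ x ∈ Ω, ∀ y ∈ Ω, edist (f x) (f y) ≤ C * edist x y} <
              essLip m f (Δ k l) + δ := hlt2
          obtain ⟨L, hLmem, hLlt⟩ := sInf_lt_iff.mp hlt3
          obtain ⟨Ω, h1, h2, h3⟩ := hLmem
          exact ⟨L, Ω, fun _ => ⟨⟨h1, h2, h3⟩, hLlt.le⟩⟩
        · exact ⟨0, ∅, fun h => absurd h hk⟩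
      choose L Ω hLΩ using hex
      calc essLipD m ρ fY (Δ 0 l)
          ≤ ENNReal.ofReal C * ∑ k ∈ Finset.range (R l), L k :=
            key l L Ω fun k hk => (hLΩ k hk).1
        _ ≤ ENNReal.ofReal C * ∑ k ∈ Finset.range (R l), (essLip m f (Δ k l) + δ) := by
            gcongr with k hk
            exact (hLΩ k (Finset.mem_range.mp hk)).2
        _ = ENNReal.ofReal C * ∑ k ∈ Finset.range (R l), essLip m f (Δ k l) + K * δ := by
            rw [Finset.sum_add_distrib, Finset.sum_const, Finset.card_range, nsmul_eq_mul,
              mul_add, hK]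
            ring
        _ = ENNReal.ofReal C * ∑ k ∈ Finset.range (R l), essLip m f (Δ k l) + ↑ε := by
            rw [hδ, ENNReal.mul_div_cancel hK0 hKt]
  constructor
  · refine ⟨ENNReal.ofReal C, ENNReal.ofReal_ne_top, bound, ?_⟩
    have hle : ∀ l, m (Δ 0 l) * essLipD m ρ fY (Δ 0 l) ≤
        ENNReal.ofReal C * ∑ k ∈ Finset.range (R l), m (Δ k l) * essLip m f (Δ k l) := by
      intro l
      calc m (Δ 0 l) * essLipD m ρ fY (Δ 0 l)
          ≤ m (Δ 0 l) * (ENNReal.ofReal C * ∑ k ∈ Finset.range (R l), essLip m f (Δ k l)) := by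
            gcongr
            exact bound l
        _ = ENNReal.ofReal C * ∑ k ∈ Finset.range (R l), m (Δ 0 l) * essLip m f (Δ k l) := by
            rw [← mul_assoc, mul_comm (m (Δ 0 l)) (ENNReal.ofReal C), mul_assoc,
              Finset.mul_sum]
        _ = ENNReal.ofReal C * ∑ k ∈ Finset.range (R l), m (Δ k l) * essLip m f (Δ k l) := by
            congr 1
            refine Finset.sum_congr rfl fun k hk => ?_
            rw [mΔ l k (Finset.mem_range.mp hk)]
    have hts : (∑' l : ℕ, m (Δ 0 l) * essLipD m ρ fY (Δ 0 l)) ≤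
        ENNReal.ofReal C *
          ∑' l : ℕ, ∑ k ∈ Finset.range (R l), m (Δ k l) * essLip m f (Δ k l) := by
      rw [← ENNReal.tsum_mul_left]
      exact ENNReal.tsum_le_tsum hle
    exact ne_top_of_le_ne_top (ENNReal.mul_ne_top ENNReal.ofReal_ne_top hf) hts
  · intro u hu hae
    have hY : MeasurableSet (⋃ l, Δ 0 l) := MeasurableSet.iUnion fun l => hYT.meas 0 l
    have h2 : ∀ k : ℕ, ∀ᵐ x ∂m, f (T^[k] x) = u (T^[k] x) - u (T (T^[k] x)) := by
      intro k
      have h0 : m {x | ¬ (f x = u x - u (T x))} = 0 := ae_iff.mp hae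
      have h1 := ((hpres.iterate k).quasiMeasurePreserving).preimage_null h0
      exact ae_iff.mpr h1
    have h3 : ∀ᵐ x ∂m, ∀ k, f (T^[k] x) = u (T^[k] x) - u (T (T^[k] x)) := ae_all_iff.mpr h2
    filter_upwards [ae_restrict_of_ae h3, ae_restrict_mem hY] with x hx hxY
    obtain ⟨l, hl⟩ := Set.mem_iUnion.mp hxY
    rw [hfY l x hl, hS l x hl]
    have hsum : ∀ k ∈ Finset.range (R l), f (T^[k] x) = u (T^[k] x) - u (T^[k+1] x) := by
      intro k _
      rw [hx k, Function.iterate_succ_apply']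
    rw [Finset.sum_congr rfl hsum, Finset.sum_range_sub' (fun k => u (T^[k] x))]
    simp
end
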